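/- arXiv:1512.07499 — 4 statements merged into one kernel-verified Lean document; each statement's English description precedes it below -/
import Mathlib

section
/- Let F : ℂ³ → ℂ² be the polynomial map F(x,y,z) = (x, [(x−1)(xz+y²)+1]·[x(xz+y²)−1]). Then (0,0) lies in the interior of Im F ∖ closure(F(Sing F)): there is an open neighborhood U of (0,0) in ℂ² such that U ⊆ Im F and F is a submersion at every point of F^{-1}(U). -/
open Filter Set Topology

noncomputable section

/-- The singular chain complex of a topological space, with `ℚ` coefficients:
the alternating face map complex of the free simplicial `ℚ`-module on the
singular simplicial set. -/
def singularChainComplex (X : Type) [TopologicalSpace X] : ChainComplex (ModuleCat ℚ) ℕ :=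
  (AlgebraicTopology.alternatingFaceMapComplex (ModuleCat ℚ)).obj
    (((CategoryTheory.SimplicialObject.whiskering (Type) (ModuleCat ℚ)).obj
      (ModuleCat.free ℚ)).obj (TopCat.toSSet.obj (TopCat.of X)))

/-- Singular homology of a topological space with `ℚ` coefficients. -/
def singularHomology (X : Type) [TopologicalSpace X] (i : ℕ) : ModuleCat ℚ :=
  (singularChainComplex X).homology i

/-- The `i`-th Betti number: the dimension over `ℚ` of the `i`-th singular
homology with `ℚ` coefficients. -/
def bettiNumber (X : Type) [TopologicalSpace X] (i : ℕ) : ℕ :=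
  Module.finrank ℚ (singularHomology X i)

/-- The `i`-th Betti number is finite. -/
def FiniteBetti (X : Type) [TopologicalSpace X] (i : ℕ) : Prop :=
  FiniteDimensional ℚ (singularHomology X i)

/-- `Φ` and `Ψ` give mutually inverse smooth maps between `S ⊆ E` and `T ⊆ F`,
i.e. a diffeomorphism between `S` and `T` (smoothness of a map on a subset is
expressed via `ContDiffOn`). -/
def IsDiffeoOn {E F : Type} [NormedAddCommGroup E] [NormedSpace ℝ E]
    [NormedAddCommGroup F] [NormedSpace ℝ F]
    (Φ : E → F) (Ψ : F → E) (S : Set E) (T : Set F) : Prop :=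
  ContDiffOn ℝ (⊤ : ℕ∞) Φ S ∧ ContDiffOn ℝ (⊤ : ℕ∞) Ψ T ∧ Set.MapsTo Φ S T ∧ Set.MapsTo Ψ T S ∧
    Set.LeftInvOn Ψ Φ S ∧ Set.RightInvOn Ψ Φ T

/-- `S` and `T` are diffeomorphic. -/
def DiffeoEquiv {E F : Type} [NormedAddCommGroup E] [NormedSpace ℝ E]
    [NormedAddCommGroup F] [NormedSpace ℝ F] (S : Set E) (T : Set F) : Prop :=
  ∃ Φ Ψ, IsDiffeoOn Φ Ψ S T

/-- The restriction of `p` to `M` is a trivial smooth fibration over `D` with fibre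
`p⁻¹(lam) ∩ M`: there is a diffeomorphism `Φ : M ∩ p⁻¹(D) → D × (M ∩ p⁻¹(lam))`
with `pr₁ ∘ Φ = p`. -/
def IsSmoothTrivialFibrationOn {E F : Type} [NormedAddCommGroup E] [NormedSpace ℝ E]
    [NormedAddCommGroup F] [NormedSpace ℝ F]
    (p : E → F) (M : Set E) (D : Set F) (lam : F) : Prop :=
  ∃ Φ : E → F × E, ∃ Ψ : F × E → E,
    IsDiffeoOn Φ Ψ (M ∩ p ⁻¹' D) (D ×ˢ (M ∩ p ⁻¹' {lam})) ∧
    ∀ x ∈ M ∩ p ⁻¹' D, (Φ x).1 = p x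

/-- `lam` is not a bifurcation value of `p : M → B`. -/
def IsNotBifurcationValueOn {E F : Type} [NormedAddCommGroup E] [NormedSpace ℝ E]
    [NormedAddCommGroup F] [NormedSpace ℝ F]
    (p : E → F) (M : Set E) (B : Set F) (lam : F) : Prop :=
  ∃ D : Set F, IsOpen D ∧ lam ∈ D ∧ D ⊆ B ∧ IsSmoothTrivialFibrationOn p M D lam

/-- `g : V → ℂᵏ` is a holomorphic local defining function for `M` at `x`, with
surjective derivative at every point of its zero set. -/
def IsLocalDefiningFunction {E : Type} [NormedAddCommGroup E] [NormedSpace ℂ E]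
    (k : ℕ) (M : Set E) (x : E) (V : Set E) (g : E → (Fin k → ℂ)) : Prop :=
  IsOpen V ∧ x ∈ V ∧ DifferentiableOn ℂ g V ∧
    (∀ y ∈ V, g y = 0 → Function.Surjective (fderiv ℂ g y)) ∧
    M ∩ V = {y ∈ V | g y = 0}

/-- `M ⊆ ℂᴺ` is a (Stein) closed complex submanifold of complex dimension `m`:
it is closed and near each of its points it is the zero set of a holomorphic
submersion to `ℂ^{N-m}`. -/
def IsSteinSubmanifold (N m : ℕ) (M : Set (Fin N → ℂ)) : Prop :=
  IsClosed M ∧ ∀ x ∈ M, ∃ V g, IsLocalDefiningFunction (N - m) M x V g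

/-- A holomorphic map `p` (defined near `M`) is a submersion at `x ∈ M`: its
derivative maps the tangent space `T_x M = ker (d_x g)` onto the target, where
`g` is a local defining function of `M` near `x` (of codimension `k`). -/
def SubmersionAt {E F : Type} [NormedAddCommGroup E] [NormedSpace ℂ E]
    [NormedAddCommGroup F] [NormedSpace ℂ F]
    (k : ℕ) (M : Set E) (p : E → F) (x : E) : Prop :=
  ∃ V g, IsLocalDefiningFunction k M x V g ∧
    Submodule.map (fderiv ℂ p x).toLinearMap
      (LinearMap.ker (fderiv ℂ g x).toLinearMap) = ⊤

/-- A connected component of the fibres of `p : M → B` vanishes at infinity as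
`t → lam`: there are `t k → lam` in `B` and connected components
`C k = connectedComponentIn (M ∩ p⁻¹(t k)) (x k)` of the fibres over `t k`
which eventually miss every compact subset. -/
def HasVanishingComponentAtInfinity {E F : Type} [TopologicalSpace E] [TopologicalSpace F]
    (M : Set E) (p : E → F) (B : Set F) (lam : F) : Prop :=
  ∃ t : ℕ → F, ∃ x : ℕ → E,
    (∀ k, t k ∈ B) ∧ Filter.Tendsto t Filter.atTop (nhds lam) ∧
    (∀ k, x k ∈ M ∩ p ⁻¹' {t k}) ∧
    ∀ K : Set E, IsCompact K →
      ∀ᶠ k in Filter.atTop, connectedComponentIn (M ∩ p ⁻¹' {t k}) (x k) ∩ K = ∅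

/-- `Φ` and `Ψ` give mutually inverse continuous maps between `S` and `T`,
i.e. a homeomorphism between `S` and `T`. -/
def IsHomeoOn {E F : Type} [TopologicalSpace E] [TopologicalSpace F]
    (Φ : E → F) (Ψ : F → E) (S : Set E) (T : Set F) : Prop :=
  ContinuousOn Φ S ∧ ContinuousOn Ψ T ∧ Set.MapsTo Φ S T ∧ Set.MapsTo Ψ T S ∧
    Set.LeftInvOn Ψ Φ S ∧ Set.RightInvOn Ψ Φ T

/-- The Euler characteristic `b₀ - b₁` of the fibre of `p : M → ·` over `t`
(the fibres under consideration are open curves, with no homology in degrees ≥ 2). -/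
def eulerCharOn {E F : Type} [TopologicalSpace E] (p : E → F) (M : Set E) (t : F) : ℤ :=
  (bettiNumber ↥(M ∩ p ⁻¹' {t}) 0 : ℤ) - (bettiNumber ↥(M ∩ p ⁻¹' {t}) 1 : ℤ)


lemma st11_key (F : ℂ × ℂ × ℂ → ℂ × ℂ)
    (hF : F = fun q => (q.1, ((q.1 - 1) * (q.1 * q.2.2 + q.2.1 ^ 2) + 1) *
      (q.1 * (q.1 * q.2.2 + q.2.1 ^ 2) - 1)))
    (x y z : ℂ) (v : ℂ × ℂ × ℂ) :
    fderiv ℂ F (x, y, z) v =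
      (v.1,
        ((x*z+y^2)*(x*(x*z+y^2)-1) + (x*z+y^2)*((x-1)*(x*z+y^2)+1)
          + (2*x*(x-1)*(x*z+y^2)+1)*z) * v.1
        + ((2*x*(x-1)*(x*z+y^2)+1)*(2*y)) * v.2.1
        + ((2*x*(x-1)*(x*z+y^2)+1)*x) * v.2.2) := by
  have hFeq : F = fun q : ℂ × ℂ × ℂ => (q.1, ((q.1 - 1) * (q.1 * q.2.2 + q.2.1 * q.2.1) + 1) *
      (q.1 * (q.1 * q.2.2 + q.2.1 * q.2.1) - 1)) := by
    rw [hF]; funext q; simp [pow_two]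
  have hx : HasFDerivAt (fun q : ℂ × ℂ × ℂ => q.1)
      (ContinuousLinearMap.fst ℂ ℂ (ℂ × ℂ)) (x,y,z) := hasFDerivAt_fst
  have hy : HasFDerivAt (fun q : ℂ × ℂ × ℂ => q.2.1)
      ((ContinuousLinearMap.fst ℂ ℂ ℂ).comp (ContinuousLinearMap.snd ℂ ℂ (ℂ × ℂ))) (x,y,z) :=
    hasFDerivAt_snd.fst
  have hz : HasFDerivAt (fun q : ℂ × ℂ × ℂ => q.2.2)
      ((ContinuousLinearMap.snd ℂ ℂ ℂ).comp (ContinuousLinearMap.snd ℂ ℂ (ℂ × ℂ))) (x,y,z) :=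
    hasFDerivAt_snd.snd
  have hw := (hx.mul hz).add (hy.mul hy)
  have hP := (((hx.sub_const 1).mul hw).add_const 1).mul ((hx.mul hw).sub_const 1)
  have hD : HasFDerivAt (fun q : ℂ × ℂ × ℂ => (q.1,
      ((q.1 - 1) * (q.1 * q.2.2 + q.2.1 * q.2.1) + 1) *
      (q.1 * (q.1 * q.2.2 + q.2.1 * q.2.1) - 1))) _ (x,y,z) := hx.prodMk hP
  rw [hFeq, hD.fderiv]
  simp [Prod.ext_iff]
  ring

lemma st11_surj (F : ℂ × ℂ × ℂ → ℂ × ℂ)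
    (hF : F = fun q => (q.1, ((q.1 - 1) * (q.1 * q.2.2 + q.2.1 ^ 2) + 1) *
      (q.1 * (q.1 * q.2.2 + q.2.1 ^ 2) - 1)))
    (q : ℂ × ℂ × ℂ) (h1 : ‖q.1‖ < 1/16) (h2 : ‖(F q).2‖ < 1/2) :
    Function.Surjective (fderiv ℂ F q) := by
  obtain ⟨x, y, z⟩ := q
  have hPv : (F (x,y,z)).2 = ((x-1)*(x*z+y^2)+1)*(x*(x*z+y^2)-1) := by rw [hF]
  rw [hPv] at h2
  have h1' : ‖x‖ < 1/16 := h1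
  have key := st11_key F hF x y z
  have hd0 : 2*x*(x-1)*(x*z+y^2)+1 ≠ 0 := by
    intro h
    have h4 : (4*(x*(x-1)))*(((x-1)*(x*z+y^2)+1)*(x*(x*z+y^2)-1) + 1) = -1 := by
      linear_combination (2*x*(x-1)*(x*z+y^2)+1) * h
    have e1 : ‖(4*(x*(x-1)) : ℂ)‖ * ‖(((x-1)*(x*z+y^2)+1)*(x*(x*z+y^2)-1) + 1 : ℂ)‖ = 1 := by
      rw [← norm_mul, h4]; simp
    have b1 : ‖x - 1‖ ≤ 17/16 := (norm_sub_le x 1).trans (by rw [norm_one]; linarith)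
    have b2 : ‖(4*(x*(x-1)) : ℂ)‖ ≤ 17/64 := by
      rw [norm_mul, norm_mul]
      have h4n : ‖(4:ℂ)‖ = 4 := by norm_num
      rw [h4n]
      nlinarith [norm_nonneg x, norm_nonneg (x-1)]
    have b3 : ‖(((x-1)*(x*z+y^2)+1)*(x*(x*z+y^2)-1) + 1 : ℂ)‖ ≤ 3/2 :=
      (norm_add_le _ _).trans (by rw [norm_one]; linarith)
    have := mul_le_mul b2 b3 (norm_nonneg _) (by norm_num)
    rw [e1] at this
    norm_num at this
  have hBC : (2*x*(x-1)*(x*z+y^2)+1)*(2*y) ≠ 0 ∨ (2*x*(x-1)*(x*z+y^2)+1)*x ≠ 0 := by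
    rcases eq_or_ne x 0 with hx0 | hx0
    · left
      subst hx0
      have hy0 : y ≠ 0 := by
        intro hy0; subst hy0
        norm_num at h2
      simpa using hy0
    · exact Or.inr (mul_ne_zero hd0 hx0)
  intro p
  obtain ⟨u, s⟩ := p
  rcases hBC with hB | hC
  · refine ⟨(u, (s - ((x*z+y^2)*(x*(x*z+y^2)-1) + (x*z+y^2)*((x-1)*(x*z+y^2)+1)
      + (2*x*(x-1)*(x*z+y^2)+1)*z) * u) / ((2*x*(x-1)*(x*z+y^2)+1)*(2*y)), 0), ?_⟩
    rw [key]
    simp only [Prod.mk.injEq]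
    refine ⟨trivial, ?_⟩
    rw [mul_div_cancel₀ _ hB]; ring
  · refine ⟨(u, 0, (s - ((x*z+y^2)*(x*(x*z+y^2)-1) + (x*z+y^2)*((x-1)*(x*z+y^2)+1)
      + (2*x*(x-1)*(x*z+y^2)+1)*z) * u) / ((2*x*(x-1)*(x*z+y^2)+1)*x)), ?_⟩
    rw [key]
    simp only [Prod.mk.injEq]
    refine ⟨trivial, ?_⟩
    rw [mul_div_cancel₀ _ hC]; ring

lemma st11_range (F : ℂ × ℂ × ℂ → ℂ × ℂ)
    (hF : F = fun q => (q.1, ((q.1 - 1) * (q.1 * q.2.2 + q.2.1 ^ 2) + 1) *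
      (q.1 * (q.1 * q.2.2 + q.2.1 ^ 2) - 1)))
    (a b : ℂ) (ha : ‖a‖ < 1) : (a, b) ∈ Set.range F := by
  rcases eq_or_ne a 0 with rfl | ha0
  · obtain ⟨yy, hyy⟩ := IsAlgClosed.exists_pow_nat_eq (b+1) zero_lt_two
    refine ⟨(0, yy, 0), ?_⟩
    rw [hF]
    simp only [Prod.mk.injEq]
    exact ⟨trivial, by linear_combination hyy⟩
  · have ha1 : a ≠ 1 := by intro h; rw [h] at ha; simp at ha
    have hc : a*(a-1) ≠ 0 := mul_ne_zero ha0 (sub_ne_zero.2 ha1)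
    obtain ⟨s, hs⟩ := IsAlgClosed.exists_pow_nat_eq (1 + 4*(a*(a-1))*(1+b)) zero_lt_two
    refine ⟨(a, 0, (s-1)/(2*(a*(a-1)))/a), ?_⟩
    rw [hF]
    simp only [Prod.mk.injEq]
    refine ⟨trivial, ?_⟩
    field_simp
    linear_combination hs

/-- For `F(x,y,z) = (x, [(x−1)(xz+y²)+1]·[x(xz+y²)−1])`, the point
`(0,0)` lies in the interior of `Im F \ closure (F (Sing F))`: there is an open
neighborhood `U` of `(0,0)` contained in the image of `F` on which `F` is a submersion
at every point of `F⁻¹(U)`. -/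
theorem statement11 (F : ℂ × ℂ × ℂ → ℂ × ℂ)
    (hF : F = fun q => (q.1, ((q.1 - 1) * (q.1 * q.2.2 + q.2.1 ^ 2) + 1) *
      (q.1 * (q.1 * q.2.2 + q.2.1 ^ 2) - 1))) :
    ((0, 0) : ℂ × ℂ) ∈ interior (Set.range F \
      closure (F '' {q | ¬ Function.Surjective (fderiv ℂ F q)})) ∧
    ∃ U : Set (ℂ × ℂ), IsOpen U ∧ ((0, 0) : ℂ × ℂ) ∈ U ∧ U ⊆ Set.range F ∧
      ∀ q, F q ∈ U → Function.Surjective (fderiv ℂ F q) := by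

  set U : Set (ℂ × ℂ) := {p : ℂ × ℂ | ‖p.1‖ < 1/16 ∧ ‖p.2‖ < 1/2} with hUdef
  have hUopen : IsOpen U :=
    (isOpen_lt (continuous_norm.comp continuous_fst) continuous_const).and
      (isOpen_lt (continuous_norm.comp continuous_snd) continuous_const)
  have hmem : ((0,0) : ℂ × ℂ) ∈ U := by
    constructor <;> simp
  have hsub1 : U ⊆ Set.range F := by
    rintro ⟨a, b⟩ hp
    exact st11_range F hF a b (lt_trans hp.1 (by norm_num))
  have hsurj : ∀ q, F q ∈ U → Function.Surjective (fderiv ℂ F q) := by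
    intro q hq
    have hq1 : (F q).1 = q.1 := by rw [hF]
    exact st11_surj F hF q (by rw [← hq1]; exact hq.1) hq.2
  refine ⟨?_, U, hUopen, hmem, hsub1, hsurj⟩
  apply mem_interior.2 ⟨U, ?_, hUopen, hmem⟩
  intro p hp
  refine ⟨hsub1 hp, ?_⟩
  intro hcl
  rcases mem_closure_iff.1 hcl U hUopen hp with ⟨w, hwU, hwS⟩
  obtain ⟨q, hq, rfl⟩ := hwS
  exact hq (hsurj q hwU)

end
end

section
/- Let F : ℂ³ → ℂ² be the polynomial map F(x,y,z) = (x, [(x−1)(xz+y²)+1]·[x(xz+y²)−1]). Then a connected component of the fibres of F vanishes at infinity as t → (0,0): there exist a sequence t_k → (0,0) in ℂ² (for instance t_k = (1/k, 0)) and, for each k, a connected component C_k of F^{-1}(t_k), such that for every compact subset K ⊆ ℂ³ one has C_k ∩ K = ∅ for all sufficiently large k. -/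
open Filter Set Topology

noncomputable section

/-- For `F(x,y,z) = (x, [(x−1)(xz+y²)+1]·[x(xz+y²)−1])`, a connected
component of the fibres of `F` vanishes at infinity as `t → (0,0)`. -/
theorem statement15 (F : ℂ × ℂ × ℂ → ℂ × ℂ)
    (hF : F = fun q => (q.1, ((q.1 - 1) * (q.1 * q.2.2 + q.2.1 ^ 2) + 1) *
      (q.1 * (q.1 * q.2.2 + q.2.1 ^ 2) - 1))) :
    ∃ t : ℕ → ℂ × ℂ, ∃ x : ℕ → ℂ × ℂ × ℂ,
      Filter.Tendsto t Filter.atTop (nhds ((0, 0) : ℂ × ℂ)) ∧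
      (∀ k, x k ∈ F ⁻¹' {t k}) ∧
      ∀ K : Set (ℂ × ℂ × ℂ), IsCompact K →
        ∀ᶠ k in Filter.atTop, connectedComponentIn (F ⁻¹' {t k}) (x k) ∩ K = ∅ := by
  subst hF
  set a : ℕ → ℂ := fun k => ((k : ℂ) + 1)⁻¹ with ha
  have hk0 : ∀ k : ℕ, ((k : ℂ) + 1) ≠ 0 := fun k => Nat.cast_add_one_ne_zero k
  have hnk : ∀ k : ℕ, ‖((k : ℂ) + 1)‖ = (k : ℝ) + 1 := by
    intro k
    have h : ((k : ℂ) + 1) = ((k + 1 : ℕ) : ℂ) := by push_cast; ring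
    rw [h, Complex.norm_natCast]
    push_cast; ring
  have hna : ∀ k : ℕ, ‖a k‖ = ((k : ℝ) + 1)⁻¹ := by
    intro k
    rw [ha]
    simp only [norm_inv]
    rw [hnk]
  have hfib0 : ∀ k : ℕ, a k * (a k * ((k : ℂ) + 1) ^ 2 + 0 ^ 2) - 1 = 0 := by
    intro k
    have h2 : a k * ((k : ℂ) + 1) = 1 := inv_mul_cancel₀ (hk0 k)
    have h1 : a k * ((k : ℂ) + 1) ^ 2 = (k : ℂ) + 1 := by
      linear_combination ((k : ℂ) + 1) * h2
    linear_combination a k * h1 + h2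
  refine ⟨fun k => (a k, 0), fun k => (a k, 0, ((k : ℂ) + 1) ^ 2), ?_, ?_, ?_⟩
  · have h1 : Tendsto (fun k : ℕ => a k) atTop (nhds (0 : ℂ)) := by
      rw [tendsto_zero_iff_norm_tendsto_zero]
      simp only [hna]
      simpa [one_div] using tendsto_one_div_add_atTop_nhds_zero_nat (𝕜 := ℝ)
    exact h1.prodMk_nhds tendsto_const_nhds
  · intro k
    simp only [Set.mem_preimage, Set.mem_singleton_iff, Prod.mk.injEq]
    exact ⟨trivial, mul_eq_zero_of_right _ (hfib0 k)⟩
  · intro K hK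
    obtain ⟨M, hM⟩ := hK.isBounded.exists_norm_le
    have hM0 : (0:ℝ) ≤ M ∨ K = ∅ := by
      rcases Set.eq_empty_or_nonempty K with h | ⟨q, hq⟩
      · exact Or.inr h
      · exact Or.inl (le_trans (norm_nonneg q) (hM q hq))
    rcases hM0 with hM0 | hKe
    swap
    · filter_upwards with k; rw [hKe, Set.inter_empty]
    obtain ⟨n, hn⟩ := exists_nat_ge (M + M ^ 2)
    filter_upwards [eventually_ge_atTop (max n 2)] with k hkN
    have hk2 : (2 : ℕ) ≤ k := le_trans (le_max_right n 2) hkN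
    have hkn : (M + M ^ 2 : ℝ) ≤ (k : ℝ) :=
      le_trans hn (by exact_mod_cast le_trans (le_max_left n 2) hkN)
    -- key facts about the fibre
    set g : ℂ × ℂ × ℂ → ℂ := fun q => q.1 * q.2.2 + q.2.1 ^ 2 with hg
    have hfib : ∀ q : ℂ × ℂ × ℂ,
        q ∈ (fun q : ℂ × ℂ × ℂ => (q.1, ((q.1 - 1) * (q.1 * q.2.2 + q.2.1 ^ 2) + 1) *
          (q.1 * (q.1 * q.2.2 + q.2.1 ^ 2) - 1))) ⁻¹' {(a k, 0)} →
        ‖g q‖ = (k : ℝ) + 1 ∨ ‖g q‖ ≤ 3 / 2 := by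
      intro q hq
      simp only [Set.mem_preimage, Set.mem_singleton_iff, Prod.mk.injEq] at hq
      obtain ⟨hq1, hq2⟩ := hq
      rcases mul_eq_zero.mp hq2 with h | h
      · -- (q.1 - 1) * w + 1 = 0, so (1 - a k) * w = 1
        right
        have hw : (1 - a k) * g q = 1 := by rw [hg]; simp only []; rw [← hq1]; ring_nf; linear_combination -h
        have hnw : ‖1 - a k‖ * ‖g q‖ = 1 := by rw [← norm_mul, hw, norm_one]
        have hak : ‖a k‖ ≤ 1 / 3 := by
          rw [hna]
          rw [inv_le_comm₀ (by positivity) (by norm_num)]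
          have : (2:ℝ) ≤ (k:ℝ) := by exact_mod_cast hk2
          linarith
        have h1a : (2/3 : ℝ) ≤ ‖1 - a k‖ := by
          have := norm_sub_norm_le (1 : ℂ) (a k)
          rw [norm_one] at this
          linarith
        nlinarith [norm_nonneg (g q), norm_nonneg (1 - a k)]
      · -- a k * w = 1
        left
        have hw : g q = (k : ℂ) + 1 := by
          have h0 : a k * g q = 1 := by rw [hg]; simp only []; rw [← hq1]; linear_combination h
          have h1 : ((k : ℂ) + 1) * a k = 1 := mul_inv_cancel₀ (hk0 k)
          calc g q = (((k : ℂ) + 1) * a k) * g q := by rw [h1, one_mul]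
            _ = ((k : ℂ) + 1) * (a k * g q) := by ring
            _ = (k : ℂ) + 1 := by rw [h0, mul_one]
        rw [hw, hnk]
    -- the chosen point is in the fibre
    have hxfib : (a k, (0:ℂ), ((k : ℂ) + 1) ^ 2) ∈ (fun q : ℂ × ℂ × ℂ => (q.1, ((q.1 - 1) * (q.1 * q.2.2 + q.2.1 ^ 2) + 1) *
          (q.1 * (q.1 * q.2.2 + q.2.1 ^ 2) - 1))) ⁻¹' {(a k, 0)} := by
      simp only [Set.mem_preimage, Set.mem_singleton_iff, Prod.mk.injEq]
      exact ⟨trivial, mul_eq_zero_of_right _ (hfib0 k)⟩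
    set S := (fun q : ℂ × ℂ × ℂ => (q.1, ((q.1 - 1) * (q.1 * q.2.2 + q.2.1 ^ 2) + 1) *
          (q.1 * (q.1 * q.2.2 + q.2.1 ^ 2) - 1))) ⁻¹' {((a k, 0) : ℂ × ℂ)} with hS
    set C := connectedComponentIn S (a k, (0:ℂ), ((k : ℂ) + 1) ^ 2) with hC
    have hgc : Continuous g := by rw [hg]; fun_prop
    have hU : IsOpen (g ⁻¹' {w : ℂ | 2 < ‖w‖}) :=
      (isOpen_lt continuous_const continuous_norm).preimage hgc
    have hV : IsOpen (g ⁻¹' {w : ℂ | ‖w‖ < 2}) :=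
      (isOpen_lt continuous_norm continuous_const).preimage hgc
    have hdisj : Disjoint (g ⁻¹' {w : ℂ | 2 < ‖w‖}) (g ⁻¹' {w : ℂ | ‖w‖ < 2}) := by
      rw [Set.disjoint_left]
      intro q h1 h2
      simp only [Set.mem_preimage, Set.mem_setOf_eq] at h1 h2
      linarith
    have hCsub : C ⊆ g ⁻¹' {w : ℂ | 2 < ‖w‖} ∪ g ⁻¹' {w : ℂ | ‖w‖ < 2} := by
      intro q hq
      rcases hfib q (connectedComponentIn_subset _ _ hq) with h | h
      · left
        simp only [Set.mem_preimage, Set.mem_setOf_eq, h]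
        have : (2:ℝ) ≤ (k:ℝ) := by exact_mod_cast hk2
        linarith
      · right
        simp only [Set.mem_preimage, Set.mem_setOf_eq]
        linarith
    have hxC : (a k, (0:ℂ), ((k : ℂ) + 1) ^ 2) ∈ C :=
      mem_connectedComponentIn hxfib
    have hxU : (a k, (0:ℂ), ((k : ℂ) + 1) ^ 2) ∈ g ⁻¹' {w : ℂ | 2 < ‖w‖} := by
      rcases hfib _ hxfib with h | h
      · simp only [Set.mem_preimage, Set.mem_setOf_eq, h]
        have : (2:ℝ) ≤ (k:ℝ) := by exact_mod_cast hk2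
        linarith
      · exfalso
        have hgx : g (a k, (0:ℂ), ((k : ℂ) + 1) ^ 2) = (k:ℂ) + 1 := by
          have h2 : a k * ((k : ℂ) + 1) = 1 := inv_mul_cancel₀ (hk0 k)
          rw [hg]; simp only []
          linear_combination ((k : ℂ) + 1) * h2
        rw [hgx, hnk] at h
        have : (2:ℝ) ≤ (k:ℝ) := by exact_mod_cast hk2
        linarith
    have hCU : C ⊆ g ⁻¹' {w : ℂ | 2 < ‖w‖} :=
      (isPreconnected_connectedComponentIn).subset_left_of_subset_union hU hV hdisj hCsub
        ⟨_, hxC, hxU⟩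
    -- now conclude emptiness
    rw [Set.eq_empty_iff_forall_notMem]
    rintro q ⟨hqC, hqK⟩
    have hq1 : q.1 = a k := by
      have := connectedComponentIn_subset _ _ hqC
      rw [hS] at this
      simp only [Set.mem_preimage, Set.mem_singleton_iff, Prod.mk.injEq] at this
      exact this.1
    have hbound : ‖g q‖ ≤ M + M ^ 2 := by
      have hq2 : ‖q.2.1‖ ≤ M := le_trans (le_trans (norm_fst_le q.2) (norm_snd_le q)) (hM q hqK)
      have hq3 : ‖q.2.2‖ ≤ M := le_trans (le_trans (norm_snd_le q.2) (norm_snd_le q)) (hM q hqK)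
      have hqa : ‖q.1‖ ≤ 1 := by
        rw [hq1, hna]
        rw [inv_le_one_iff₀]
        right; linarith [Nat.cast_nonneg (α := ℝ) k]
      calc ‖g q‖ ≤ ‖q.1 * q.2.2‖ + ‖q.2.1 ^ 2‖ := norm_add_le _ _
        _ = ‖q.1‖ * ‖q.2.2‖ + ‖q.2.1‖ ^ 2 := by rw [norm_mul, norm_pow]
        _ ≤ 1 * M + M ^ 2 := by gcongr
        _ = M + M ^ 2 := by ring
    rcases hfib q (connectedComponentIn_subset _ _ hqC) with h | h
    · rw [h] at hbound; linarith
    · have := hCU hqC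
      simp only [Set.mem_preimage, Set.mem_setOf_eq] at this
      linarith

end
end

section
/- Let M = ℂ² ∖ ({(z,w) ∈ ℂ² : zw = 1} ∪ {(0,0)}) and let p : M → ℂ be the projection p(z,w) = z. Then p is a surjective holomorphic submersion and every fibre p^{-1}(z₀), z₀ ∈ ℂ, is biholomorphic to ℂ ∖ {0}, but p is not a locally trivial fibration: there is no open neighborhood D of 0 in ℂ together with a homeomorphism Φ : p^{-1}(D) → D × p^{-1}(0) satisfying pr_1 ∘ Φ = p. -/
open Filter Set Topology

noncomputable section

private lemma aux_subseq (c : ℂ) (R : ℝ) (hRc : R < ‖c‖) (φ : ℂ → ℂ)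
    (hφc : ContinuousOn φ {w : ℂ | w ≠ c}) (hφm : ∀ w : ℂ, w ≠ c → φ w ≠ 0)
    (u : ℕ → ℂ) (hbd : ∀ n, ‖u n‖ ≤ R) :
    ∃ (b : ℂ) (nk : ℕ → ℕ), b ≠ 0 ∧ StrictMono nk ∧
      Tendsto (fun k => φ (u (nk k))) atTop (𝓝 b) := by
  have hmem : ∀ n, u n ∈ Metric.closedBall (0 : ℂ) R := by
    intro n
    simpa [Metric.mem_closedBall, dist_zero_right] using hbd n
  obtain ⟨a, ha, nk, hnk, hlim⟩ := (isCompact_closedBall (0 : ℂ) R).tendsto_subseq hmem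
  have hanorm : ‖a‖ ≤ R := by
    simpa [Metric.mem_closedBall, dist_zero_right] using ha
  have hane : a ≠ c := fun h => absurd hRc (not_lt.2 (h ▸ hanorm))
  have hca : ContinuousAt φ a := hφc.continuousAt (isOpen_ne.mem_nhds hane)
  exact ⟨φ a, nk, hφm a hane, hnk, hca.tendsto.comp hlim⟩

private lemma aux_conn (c : ℂ) (R : ℝ) (hR0 : 0 ≤ R) (hRc : R < ‖c‖) :
    IsPreconnected {w : ℂ | R < ‖w‖ ∧ w ≠ c} := by
  set g : ℝ × ℝ → ℂ :=
    fun q => ((R + Real.exp q.1 : ℝ) : ℂ) * Complex.exp ((q.2 : ℂ) * Complex.I) with hg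
  have hgc : Continuous g := by
    apply Continuous.mul
    · exact Complex.continuous_ofReal.comp
        (continuous_const.add (Real.continuous_exp.comp continuous_fst))
    · exact Complex.continuous_exp.comp
        ((Complex.continuous_ofReal.comp continuous_snd).mul continuous_const)
  have hnorm : ∀ q : ℝ × ℝ, ‖g q‖ = R + Real.exp q.1 := by
    intro q
    rw [hg]
    simp only [norm_mul, Complex.norm_real, Real.norm_eq_abs,
      Complex.norm_exp_ofReal_mul_I, mul_one]
    exact abs_of_nonneg (by positivity)
  have himg : g '' (g ⁻¹' {c})ᶜ = {w : ℂ | R < ‖w‖ ∧ w ≠ c} := by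
    apply Set.Subset.antisymm
    · rintro w ⟨q, hq, rfl⟩
      refine ⟨by rw [hnorm]; linarith [Real.exp_pos q.1], by simpa using hq⟩
    · rintro w ⟨h1, h2⟩
      have hpos : 0 < ‖w‖ - R := by linarith
      have hgw : g (Real.log (‖w‖ - R), Complex.arg w) = w := by
        rw [hg]
        simp only
        rw [Real.exp_log hpos, show (R + (‖w‖ - R)) = ‖w‖ by ring]
        exact Complex.norm_mul_exp_arg_mul_I w
      exact ⟨(Real.log (‖w‖ - R), Complex.arg w),
        fun hc => h2 (by rwa [Set.mem_preimage, Set.mem_singleton_iff, hgw] at hc), hgw⟩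
  have hcount : (g ⁻¹' {c}).Countable := by
    apply Set.Countable.mono ?_ (Set.countable_range
      (fun n : ℤ => ((Real.log (‖c‖ - R), Complex.arg c + n * (2 * Real.pi)) : ℝ × ℝ)))
    rintro ⟨s, θ⟩ hq
    have hgq : g (s, θ) = c := hq
    have hn : R + Real.exp s = ‖c‖ := by rw [← hnorm (s, θ), hgq]
    have hs : s = Real.log (‖c‖ - R) := by
      have he : Real.exp s = ‖c‖ - R := by linarith
      rw [← he, Real.log_exp]
    have hcpos : (0 : ℝ) < ‖c‖ := by linarith
    have hcne : ((‖c‖ : ℝ) : ℂ) ≠ 0 := by exact_mod_cast hcpos.ne'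
    have h1 : ((‖c‖ : ℝ) : ℂ) * Complex.exp ((θ : ℂ) * Complex.I) = c := by
      calc ((‖c‖ : ℝ) : ℂ) * Complex.exp ((θ : ℂ) * Complex.I)
          = ((R + Real.exp s : ℝ) : ℂ) * Complex.exp ((θ : ℂ) * Complex.I) := by rw [hn]
        _ = c := hgq
    have h2 : ((‖c‖ : ℝ) : ℂ) * Complex.exp ((Complex.arg c : ℂ) * Complex.I) = c := by
      simpa using Complex.norm_mul_exp_arg_mul_I c
    have hexp : Complex.exp ((θ : ℂ) * Complex.I)
        = Complex.exp ((Complex.arg c : ℂ) * Complex.I) :=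
      mul_left_cancel₀ hcne (h1.trans h2.symm)
    obtain ⟨n, hn2⟩ := Complex.exp_eq_exp_iff_exists_int.mp hexp
    refine ⟨n, ?_⟩
    have hθC : (θ : ℂ) * Complex.I
        = ((Complex.arg c + n * (2 * Real.pi) : ℝ) : ℂ) * Complex.I := by
      rw [hn2]; push_cast; ring
    have hθ : θ = Complex.arg c + n * (2 * Real.pi) := by
      have hcan := mul_right_cancel₀ Complex.I_ne_zero hθC
      exact_mod_cast hcan
    simp [Prod.ext_iff, hs, hθ]
  have hrank : 1 < Module.rank ℝ (ℝ × ℝ) := by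
    rw [rank_prod', Module.rank_self, one_add_one_eq_two]
    exact Cardinal.one_lt_two
  have hpc : IsPathConnected ((g ⁻¹' {c})ᶜ) :=
    hcount.isPathConnected_compl_of_one_lt_rank hrank
  have himage := (hpc.isConnected.isPreconnected).image g hgc.continuousOn
  rwa [himg] at himage

private lemma aux_core (c : ℂ) (R : ℝ) (hRc : R < ‖c‖) (φ ψ : ℂ → ℂ)
    (hφc : ContinuousOn φ {w : ℂ | w ≠ c})
    (hψm : ∀ w : ℂ, w ≠ 0 → ψ w ≠ c)
    (hφm : ∀ w : ℂ, w ≠ c → φ w ≠ 0)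
    (hl : ∀ w : ℂ, w ≠ 0 → φ (ψ w) = w)
    (hr : ∀ w : ℂ, w ≠ c → ψ (φ w) = w)
    (hb : ∀ w : ℂ, 1 / 2 ≤ ‖w‖ → ‖w‖ ≤ 2 → ‖ψ w‖ ≤ R) : False := by
  have hR0 : 0 ≤ R :=
    le_trans (norm_nonneg (ψ 1)) (hb 1 (by rw [norm_one]; norm_num) (by rw [norm_one]; norm_num))
  set Vin : Set ℂ :=
    {w : ℂ | w ≠ c} ∩ φ ⁻¹' ({w : ℂ | w ≠ 0} ∩ {w : ℂ | ‖w‖ < 1 / 2}) with hVin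
  set Vout : Set ℂ := {w : ℂ | w ≠ c} ∩ φ ⁻¹' {w : ℂ | 2 < ‖w‖} with hVout
  have hVinO : IsOpen Vin :=
    hφc.isOpen_inter_preimage isOpen_ne
      (isOpen_ne.inter (isOpen_lt continuous_norm continuous_const))
  have hVoutO : IsOpen Vout :=
    hφc.isOpen_inter_preimage isOpen_ne (isOpen_lt continuous_const continuous_norm)
  have hdisj : Disjoint Vin Vout := by
    rw [Set.disjoint_left]
    rintro w ⟨-, hin⟩ ⟨-, hout⟩
    simp only [Set.mem_preimage, Set.mem_inter_iff, Set.mem_setOf_eq] at hin hout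
    have h2 := hin.2
    have h3 := hout
    linarith
  have hEsub : {w : ℂ | R < ‖w‖ ∧ w ≠ c} ⊆ Vin ∪ Vout := by
    rintro w ⟨hw1, hw2⟩
    have hφw := hφm w hw2
    rcases lt_or_ge ‖φ w‖ (1 / 2) with h | h
    · exact Or.inl ⟨hw2, hφw, h⟩
    rcases lt_or_ge 2 ‖φ w‖ with h2 | h2
    · exact Or.inr ⟨hw2, h2⟩
    · exfalso
      have hbw := hb (φ w) h h2
      rw [hr w hw2] at hbw
      linarith
  have hconn := aux_conn c R hR0 hRc
  rcases hconn.subset_or_subset hVinO hVoutO hdisj hEsub with hsub | hsub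
  · -- the "outer" region is trapped in a ball; contradiction with the sequence n + 3
    have htrap : ∀ w ∈ Vout, ‖w‖ ≤ R := by
      intro w hw
      by_contra hcon
      push_neg at hcon
      exact Set.disjoint_left.1 hdisj (hsub ⟨hcon, hw.1⟩) hw
    have hnorm3 : ∀ n : ℕ, ‖((n : ℂ) + 3)‖ = (n : ℝ) + 3 := by
      intro n
      rw [show ((n : ℂ) + 3) = (((n : ℝ) + 3 : ℝ) : ℂ) by push_cast; ring,
        Complex.norm_real, Real.norm_eq_abs, abs_of_pos (by positivity)]
    have hne3 : ∀ n : ℕ, ((n : ℂ) + 3) ≠ 0 := by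
      intro n hcon
      have hh := hnorm3 n
      rw [hcon, norm_zero] at hh
      have hpos : (0 : ℝ) < (n : ℝ) + 3 := by positivity
      linarith
    have hbd : ∀ n : ℕ, ‖ψ ((n : ℂ) + 3)‖ ≤ R := by
      intro n
      apply htrap
      refine ⟨hψm _ (hne3 n), ?_⟩
      show φ (ψ ((n : ℂ) + 3)) ∈ {w : ℂ | 2 < ‖w‖}
      rw [Set.mem_setOf_eq, hl _ (hne3 n), hnorm3 n]
      have hge : (0 : ℝ) ≤ (n : ℝ) := Nat.cast_nonneg n
      linarith
    obtain ⟨b, nk, hb0, hmono, hlim⟩ := aux_subseq c R hRc φ hφc hφm _ hbd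
    have hlim2 : Tendsto (fun k => ((nk k : ℂ) + 3)) atTop (𝓝 b) :=
      hlim.congr fun k => hl _ (hne3 (nk k))
    have h1 : Tendsto (fun k => ‖((nk k : ℂ) + 3)‖) atTop (𝓝 ‖b‖) := hlim2.norm
    have h2 : Tendsto (fun k => ‖((nk k : ℂ) + 3)‖) atTop atTop := by
      apply tendsto_atTop_mono (fun k => ?_) tendsto_natCast_atTop_atTop
      rw [hnorm3]
      have h3 : (k : ℝ) ≤ (nk k : ℝ) := by exact_mod_cast hmono.le_apply
      linarith
    exact not_tendsto_atTop_of_tendsto_nhds h1 h2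
  · -- the "inner" region is trapped in a ball; contradiction with the sequence 1/(n+3)
    have htrap : ∀ w ∈ Vin, ‖w‖ ≤ R := by
      intro w hw
      by_contra hcon
      push_neg at hcon
      exact Set.disjoint_left.1 hdisj hw (hsub ⟨hcon, hw.1⟩)
    have hnorm3 : ∀ n : ℕ, ‖((((n : ℝ) + 3)⁻¹ : ℝ) : ℂ)‖ = ((n : ℝ) + 3)⁻¹ := by
      intro n
      rw [Complex.norm_real, Real.norm_eq_abs, abs_of_pos (by positivity)]
    have hne3 : ∀ n : ℕ, ((((n : ℝ) + 3)⁻¹ : ℝ) : ℂ) ≠ 0 := by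
      intro n hcon
      have hpos : (0 : ℝ) < ((n : ℝ) + 3)⁻¹ := by positivity
      rw [Complex.ofReal_eq_zero] at hcon
      linarith
    have hbd : ∀ n : ℕ, ‖ψ ((((n : ℝ) + 3)⁻¹ : ℝ) : ℂ)‖ ≤ R := by
      intro n
      apply htrap
      refine ⟨hψm _ (hne3 n), ?_⟩
      show φ (ψ ((((n : ℝ) + 3)⁻¹ : ℝ) : ℂ)) ∈ ({w : ℂ | w ≠ 0} ∩ {w : ℂ | ‖w‖ < 1 / 2})
      rw [hl _ (hne3 n)]
      refine ⟨hne3 n, ?_⟩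
      show ‖((((n : ℝ) + 3)⁻¹ : ℝ) : ℂ)‖ < 1 / 2
      rw [hnorm3 n]
      have h3 : (3 : ℝ) ≤ (n : ℝ) + 3 := by
        have := Nat.cast_nonneg (α := ℝ) n
        linarith
      have h4 : ((n : ℝ) + 3)⁻¹ ≤ (3 : ℝ)⁻¹ := by
        apply inv_anti₀ (by norm_num) h3
      linarith
    obtain ⟨b, nk, hb0, hmono, hlim⟩ := aux_subseq c R hRc φ hφc hφm _ hbd
    have hlim2 : Tendsto (fun k => ((((nk k : ℝ) + 3)⁻¹ : ℝ) : ℂ)) atTop (𝓝 b) :=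
      hlim.congr fun k => hl _ (hne3 (nk k))
    have hzero : Tendsto (fun k => ((((nk k : ℝ) + 3)⁻¹ : ℝ) : ℂ)) atTop (𝓝 0) := by
      have hreal : Tendsto (fun k : ℕ => (((nk k : ℝ) + 3)⁻¹ : ℝ)) atTop (𝓝 0) := by
        apply Filter.Tendsto.inv_tendsto_atTop
        apply tendsto_atTop_add_const_right
        exact tendsto_natCast_atTop_atTop.comp hmono.tendsto_atTop
      have hcomp := (Complex.continuous_ofReal.tendsto 0).comp hreal
      rw [Complex.ofReal_zero] at hcomp
      exact hcomp
    exact hb0 (tendsto_nhds_unique hlim2 hzero)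


/-- Let `M = ℂ² \ ({zw = 1} ∪ {(0,0)})` and `p(z,w) = z`. Then `p` is a
surjective holomorphic submersion of `M` onto `ℂ` with all fibres biholomorphic to
`ℂ \ {0}`, yet `p` is not trivial over any neighborhood of `0`. -/
theorem statement16 (M : Set (ℂ × ℂ))
    (hM : M = {q : ℂ × ℂ | q.1 * q.2 ≠ 1 ∧ q ≠ (0, 0)})
    (p : ℂ × ℂ → ℂ) (hp : p = Prod.fst) :
    (∀ z₀ : ℂ, ∃ w : ℂ, (z₀, w) ∈ M) ∧
    Differentiable ℂ p ∧
    (∀ q ∈ M, Function.Surjective (fderiv ℂ p q)) ∧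
    (∀ z₀ : ℂ, ∃ φ ψ : ℂ → ℂ, Differentiable ℂ φ ∧ Differentiable ℂ ψ ∧
      Set.MapsTo φ {w : ℂ | w ≠ 0} {w : ℂ | (z₀, w) ∈ M} ∧
      Set.MapsTo ψ {w : ℂ | (z₀, w) ∈ M} {w : ℂ | w ≠ 0} ∧
      Set.LeftInvOn ψ φ {w : ℂ | w ≠ 0} ∧
      Set.RightInvOn ψ φ {w : ℂ | (z₀, w) ∈ M}) ∧
    ¬ ∃ D : Set ℂ, IsOpen D ∧ (0 : ℂ) ∈ D ∧
      ∃ (Φ : ℂ × ℂ → ℂ × (ℂ × ℂ)) (Ψ : ℂ × (ℂ × ℂ) → ℂ × ℂ),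
        IsHomeoOn Φ Ψ (M ∩ p ⁻¹' D) (D ×ˢ (M ∩ p ⁻¹' {(0 : ℂ)})) ∧
        ∀ q ∈ M ∩ p ⁻¹' D, (Φ q).1 = p q := by
  subst hM hp
  refine ⟨?_, ?_, ?_, ?_, ?_⟩
  · -- surjectivity
    intro z₀
    by_cases h : z₀ = 0
    · exact ⟨1, by simp [h, Prod.ext_iff]⟩
    · exact ⟨0, by simp [h, Prod.ext_iff]⟩
  · exact differentiable_fst
  · -- submersion
    intro q _
    rw [fderiv_fst]
    exact fun y => ⟨(y, 0), rfl⟩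
  · -- fibres biholomorphic to ℂ \ {0}
    intro z₀
    refine ⟨fun w => w + z₀⁻¹, fun w => w - z₀⁻¹,
      differentiable_id.add_const _, differentiable_id.sub_const _, ?_, ?_, ?_, ?_⟩
    · intro w hw
      simp only [Set.mem_setOf_eq] at hw ⊢
      constructor
      · by_cases h : z₀ = 0
        · simp [h]
        · rw [mul_add, mul_inv_cancel₀ h]
          intro hcon
          rcases mul_eq_zero.mp (add_eq_right.mp hcon) with h' | h'
          · exact h h'
          · exact hw h'
      · by_cases h : z₀ = 0
        · intro hcon
          apply hw
          have h2 := congrArg Prod.snd hcon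
          simp only [h, inv_zero, add_zero] at h2
          exact h2
        · intro hcon
          exact h (congrArg Prod.fst hcon)
    · intro w hw
      simp only [Set.mem_setOf_eq] at hw ⊢
      intro hcon
      have hw2 : w = z₀⁻¹ := by rwa [sub_eq_zero] at hcon
      by_cases h : z₀ = 0
      · apply hw.2
        have hw0 : w = 0 := by rw [hw2, h, inv_zero]
        rw [h, hw0]
      · exact hw.1 (by rw [hw2, mul_inv_cancel₀ h])
    · intro w _
      show w + z₀⁻¹ - z₀⁻¹ = w
      ring
    · intro w _
      show w - z₀⁻¹ + z₀⁻¹ = w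
      ring
  · -- p is not a trivial fibration over any neighbourhood of 0
    rintro ⟨D, hD, hD0, Φ, Ψ, ⟨hΦc, hΨc, hΦm, hΨm, hLI, hRI⟩, hfst⟩
    -- a closed ball inside D
    obtain ⟨r, hr0, hrD⟩ : ∃ r > 0, Metric.closedBall (0 : ℂ) r ⊆ D := by
      obtain ⟨ε, hε, hball⟩ := Metric.isOpen_iff.1 hD 0 hD0
      exact ⟨ε / 2, by linarith,
        (Metric.closedBall_subset_ball (by linarith)).trans hball⟩
    -- the compact set over the closed ball with annulus fibres
    set Ann : Set ℂ := {w : ℂ | 1 / 2 ≤ ‖w‖ ∧ ‖w‖ ≤ 2} with hAnn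
    set KT : Set (ℂ × (ℂ × ℂ)) :=
      Metric.closedBall (0 : ℂ) r ×ˢ (({(0 : ℂ)} : Set ℂ) ×ˢ Ann) with hKT
    have hAnnC : IsCompact Ann := by
      apply (isCompact_closedBall (0 : ℂ) 2).of_isClosed_subset
      · exact (isClosed_le continuous_const continuous_norm).inter
          (isClosed_le continuous_norm continuous_const)
      · intro w hw
        simpa [Metric.mem_closedBall, dist_zero_right] using hw.2
    have hKTc : IsCompact KT :=
      (isCompact_closedBall _ _).prod (isCompact_singleton.prod hAnnC)
    have hKTT : KT ⊆ D ×ˢ ({q : ℂ × ℂ | q.1 * q.2 ≠ 1 ∧ q ≠ (0, 0)}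
        ∩ Prod.fst ⁻¹' {(0 : ℂ)}) := by
      rintro ⟨z, w⟩ ⟨hz, hw1, hw2⟩
      have hw1' : w.1 = 0 := hw1
      refine ⟨hrD hz, ⟨?_, ?_⟩, hw1'⟩
      · rw [hw1']
        simp
      · intro hcon
        have h2 := congrArg Prod.snd hcon
        simp only at h2
        have h3 := hw2.1
        rw [h2, norm_zero] at h3
        linarith
    -- a bound for Ψ on this compact set
    have hcomp : IsCompact (Ψ '' KT) := hKTc.image_of_continuousOn (hΨc.mono hKTT)
    obtain ⟨R₀, hR₀⟩ := hcomp.isBounded.subset_closedBall (0 : ℂ × ℂ)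
    set R : ℝ := max R₀ 0 + 1 with hR
    have hRpos : 0 < R := by
      have := le_max_right R₀ 0
      rw [hR]; linarith
    have hRb : ∀ x ∈ Ψ '' KT, ‖x.2‖ ≤ R := by
      intro x hx
      have h1 : ‖x‖ ≤ R₀ := by
        simpa [Metric.mem_closedBall, dist_zero_right] using hR₀ hx
      have h2 := le_max_left R₀ 0
      calc ‖x.2‖ ≤ ‖x‖ := norm_snd_le x
        _ ≤ R₀ := h1
        _ ≤ R := by rw [hR]; linarith
    -- choose a small nonzero z
    have hmin : 0 < min r (1 / R) := lt_min hr0 (by positivity)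
    set ε : ℝ := min r (1 / R) / 2 with hεdef
    have hε0 : 0 < ε := by rw [hεdef]; linarith
    set z : ℂ := (ε : ℂ) with hzdef
    have hz0 : z ≠ 0 := by
      rw [hzdef]
      exact_mod_cast hε0.ne'
    have hznorm : ‖z‖ = ε := by
      rw [hzdef, Complex.norm_real, Real.norm_eq_abs, abs_of_pos hε0]
    have hzr : ‖z‖ ≤ r := by
      rw [hznorm, hεdef]
      have := min_le_left r (1 / R)
      linarith
    have hzD : z ∈ D := hrD (by
      rw [Metric.mem_closedBall, dist_zero_right]
      exact hzr)
    set c : ℂ := z⁻¹ with hcdef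
    have hcnorm : R < ‖c‖ := by
      have h1 : ε < 1 / R := by
        have := min_le_right r (1 / R)
        rw [hεdef]; linarith
      have h2 := one_div_lt_one_div_of_lt hε0 h1
      rw [one_div_one_div] at h2
      rw [hcdef, norm_inv, hznorm, inv_eq_one_div]
      exact h2
    -- fibrewise maps
    set ψf : ℂ → ℂ := fun w => (Ψ (z, ((0 : ℂ), w))).2 with hψf
    set φf : ℂ → ℂ := fun w => (Φ (z, w)).2.2 with hφf
    have hTmem : ∀ w : ℂ, w ≠ 0 → (z, ((0 : ℂ), w)) ∈
        D ×ˢ ({q : ℂ × ℂ | q.1 * q.2 ≠ 1 ∧ q ≠ (0, 0)} ∩ Prod.fst ⁻¹' {(0 : ℂ)}) := by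
      intro w hw
      refine ⟨hzD, ⟨?_, ?_⟩, rfl⟩
      · show (0 : ℂ) * w ≠ 1
        simp
      · intro hcon
        exact hw (congrArg Prod.snd hcon)
    have hSmem : ∀ w : ℂ, w ≠ c → (z, w) ∈
        {q : ℂ × ℂ | q.1 * q.2 ≠ 1 ∧ q ≠ (0, 0)} ∩ Prod.fst ⁻¹' D := by
      intro w hw
      refine ⟨⟨?_, ?_⟩, hzD⟩
      · intro hcon
        apply hw
        have h2 : z⁻¹ * (z * w) = z⁻¹ * 1 := by rw [hcon]
        rw [← mul_assoc, inv_mul_cancel₀ hz0, one_mul, mul_one] at h2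
        rw [h2, hcdef]
      · intro hcon
        exact hz0 (congrArg Prod.fst hcon)
    have hΨz : ∀ w : ℂ, w ≠ 0 → Ψ (z, ((0 : ℂ), w)) = (z, ψf w) := by
      intro w hw
      have hT := hTmem w hw
      have hS := hΨm hT
      have h1 : (Φ (Ψ (z, ((0 : ℂ), w)))).1 = (Ψ (z, ((0 : ℂ), w))).1 := hfst _ hS
      have h2 : Φ (Ψ (z, ((0 : ℂ), w))) = (z, ((0 : ℂ), w)) := hRI hT
      have h3 : (Ψ (z, ((0 : ℂ), w))).1 = z := by rw [← h1, h2]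
      exact Prod.ext h3 rfl
    have hψmc : ∀ w : ℂ, w ≠ 0 → ψf w ≠ c := by
      intro w hw hcon
      have hS := hΨm (hTmem w hw)
      rw [hΨz w hw] at hS
      apply hS.1.1
      show z * ψf w = 1
      rw [hcon, hcdef, mul_inv_cancel₀ hz0]
    have hΦz : ∀ w : ℂ, w ≠ c → Φ (z, w) = (z, ((0 : ℂ), φf w)) := by
      intro w hw
      have hS := hSmem w hw
      have hT := hΦm hS
      have h1 : (Φ (z, w)).1 = z := hfst _ hS
      have h2 : (Φ (z, w)).2.1 = 0 := hT.2.2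
      exact Prod.ext h1 (Prod.ext h2 rfl)
    have hφm0 : ∀ w : ℂ, w ≠ c → φf w ≠ 0 := by
      intro w hw hcon
      have hT := hΦm (hSmem w hw)
      have hne := hT.2.1.2
      rw [hΦz w hw] at hne
      apply hne
      rw [hcon]
    have hlinv : ∀ w : ℂ, w ≠ 0 → φf (ψf w) = w := by
      intro w hw
      have h2 : Φ (Ψ (z, ((0 : ℂ), w))) = (z, ((0 : ℂ), w)) := hRI (hTmem w hw)
      rw [hΨz w hw] at h2
      show (Φ (z, ψf w)).2.2 = w
      rw [h2]
    have hrinv : ∀ w : ℂ, w ≠ c → ψf (φf w) = w := by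
      intro w hw
      have h2 : Ψ (Φ (z, w)) = (z, w) := hLI (hSmem w hw)
      rw [hΦz w hw] at h2
      show (Ψ (z, ((0 : ℂ), φf w))).2 = w
      rw [h2]
    have hφcont : ContinuousOn φf {w : ℂ | w ≠ c} := by
      have h1 : ContinuousOn (fun w : ℂ => Φ (z, w)) {w : ℂ | w ≠ c} :=
        hΦc.comp (Continuous.continuousOn (continuous_const.prodMk continuous_id))
          fun w hw => hSmem w hw
      exact (continuous_snd.comp continuous_snd).comp_continuousOn h1
    have hbound : ∀ w : ℂ, 1 / 2 ≤ ‖w‖ → ‖w‖ ≤ 2 → ‖ψf w‖ ≤ R := by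
      intro w h1 h2
      have hmem : (z, ((0 : ℂ), w)) ∈ KT := by
        refine ⟨?_, rfl, h1, h2⟩
        rw [Metric.mem_closedBall, dist_zero_right]
        exact hzr
      exact hRb _ ⟨_, hmem, rfl⟩
    exact aux_core c R hcnorm φf ψf hφcont hψmc hφm0 hlinv hrinv hbound


end
end

section
/- Let M = ℂ² ∖ ((⋃_{n ∈ ℕ} {(z,w) ∈ ℂ² : w = n}) ∪ {(z,w) ∈ ℂ² : z = w}) and let p : M → ℂ be the projection p(z,w) = z. Then p is a surjective holomorphic submersion, every fibre p^{-1}(z₀) is homeomorphic to ℂ ∖ ℕ, and yet p is not a locally trivial fibration: it is not the case that every point z₀ ∈ ℂ has an open neighborhood D with a homeomorphism Φ : p^{-1}(D) → D × p^{-1}(z₀) satisfying pr_1 ∘ Φ = p. -/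
open Filter Set Topology

noncomputable section

section AuxProof
open Metric




lemma natC_dist {n m : ℕ} (h : n ≠ m) : 1 ≤ dist ((n:ℂ)) ((m:ℂ)) := by
  have he : ((n:ℂ)) - (m:ℂ) = (((n:ℝ) - (m:ℝ) : ℝ) : ℂ) := by push_cast; ring
  rw [Complex.dist_eq, he, Complex.norm_real, Real.norm_eq_abs]
  have h1 : ((n:ℤ)) ≠ (m:ℤ) := by exact_mod_cast h
  have h2 : (1:ℤ) ≤ |(n:ℤ) - (m:ℤ)| := Int.one_le_abs (sub_ne_zero.2 h1)
  exact_mod_cast h2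

lemma natC_dist0 (m : ℕ) : dist ((m:ℂ)) 0 = m := by
  rw [Complex.dist_eq, sub_zero]
  simp

lemma natC_gap (w : ℂ) (hw : ∀ n : ℕ, w ≠ (n:ℂ)) : ∃ ε > 0, ∀ n : ℕ, ε ≤ dist w (n:ℂ) := by
  obtain ⟨n₀, hn₀⟩ : ∃ n₀ : ℕ, 2 * dist w 0 < n₀ := exists_nat_gt (2 * dist w 0)
  have hfin : ∀ m : ℕ, n₀ < m → dist w 0 ≤ dist w (m:ℂ) := by
    intro m hm
    have h1 : (m:ℝ) = dist (0:ℂ) (m:ℂ) := by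
      rw [dist_comm, natC_dist0]
    have h2 := dist_triangle (0:ℂ) w (m:ℂ)
    have h3 : (n₀:ℝ) < m := by exact_mod_cast hm
    rw [dist_comm (0:ℂ) w] at h2
    rw [← h1] at h2
    linarith
  set s : Finset ℕ := Finset.range (n₀+1) with hs
  have hne : s.Nonempty := ⟨0, by simp [hs]⟩
  obtain ⟨m₀, _, hm₀⟩ := s.exists_min_image (fun n => dist w (n:ℂ)) hne
  have hw0 : (0:ℝ) < dist w 0 := by
    have : w ≠ 0 := by simpa using hw 0
    exact dist_pos.2 this
  refine ⟨min (dist w (m₀:ℂ)) (dist w 0), lt_min (dist_pos.2 (hw m₀)) hw0, fun n => ?_⟩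
  rcases le_or_gt n n₀ with h | h
  · exact le_trans (min_le_left _ _) (hm₀ n (by simp [hs]; omega))
  · exact le_trans (min_le_right _ _) (hfin n h)

/-- the set of natural numbers inside ℂ is closed -/
lemma natC_closed : IsClosed {w : ℂ | ∃ n : ℕ, w = (n:ℂ)} := by
  rw [← isOpen_compl_iff]
  rw [Metric.isOpen_iff]
  intro w hw
  simp only [mem_compl_iff, mem_setOf_eq, not_exists] at hw
  obtain ⟨ε, hε, h⟩ := natC_gap w hw
  exact ⟨ε, hε, fun x hx => by
    simp only [mem_compl_iff, mem_setOf_eq, not_exists]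
    rintro n rfl
    rw [mem_ball, dist_comm] at hx
    have := h n
    linarith⟩

lemma open_nonnat : IsOpen {w : ℂ | ∀ n : ℕ, w ≠ (n:ℂ)} := by
  have : {w : ℂ | ∀ n : ℕ, w ≠ (n:ℂ)} = {w : ℂ | ∃ n : ℕ, w = (n:ℂ)}ᶜ := by
    ext w; simp [not_exists]
  rw [this]
  exact natC_closed.isOpen_compl

lemma Mset_open : IsOpen {q : ℂ × ℂ | (∀ n : ℕ, q.2 ≠ (n : ℂ)) ∧ q.1 ≠ q.2} := by
  have h1 : IsOpen {q : ℂ × ℂ | ∀ n : ℕ, q.2 ≠ (n : ℂ)} :=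
    open_nonnat.preimage continuous_snd
  have h2 : IsOpen {q : ℂ × ℂ | q.1 ≠ q.2} :=
    isOpen_ne_fun continuous_fst continuous_snd
  exact h1.inter h2



def shearV (g : ℝ → ℝ) (hg : Continuous g) : ℂ ≃ₜ ℂ where
  toFun w := w + (g w.re : ℂ) * Complex.I
  invFun w := w - (g w.re : ℂ) * Complex.I
  left_inv w := by simp
  right_inv w := by simp
  continuous_toFun := by continuity
  continuous_invFun := by continuity

def shearH (f : ℝ → ℝ) (hf : Continuous f) : ℂ ≃ₜ ℂ where
  toFun w := w + (f w.im : ℂ)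
  invFun w := w - (f w.im : ℂ)
  left_inv w := by simp
  right_inv w := by simp
  continuous_toFun := by continuity
  continuous_invFun := by continuity

def sigA (x : ℝ) : ℝ := min 1 (max 0 (x+2))
def chiA (y : ℝ) : ℝ := max 0 (1 - |y|)
def funA (k x : ℝ) : ℝ := x + k * sigA x
def funB (k u : ℝ) : ℝ := max (min u ((u - 2*k)/(1+k))) (u - k)

lemma sigA_cont : Continuous sigA := continuous_const.min (continuous_const.max (continuous_id.add continuous_const))
lemma chiA_cont : Continuous chiA := continuous_const.max (continuous_const.sub continuous_abs)
lemma chiA_nonneg (y : ℝ) : 0 ≤ chiA y := le_max_left _ _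
lemma chiA_le_one (y : ℝ) : chiA y ≤ 1 := by
  unfold chiA
  have := abs_nonneg y
  apply max_le <;> linarith

lemma funB_funA (k x : ℝ) (hk0 : 0 ≤ k) (hk1 : k ≤ 1) : funB k (funA k x) = x := by
  have hk : (0:ℝ) < 1 + k := by linarith
  unfold funA funB sigA
  rcases le_or_gt x (-2) with h | h
  · have hs : min 1 (max 0 (x+2)) = 0 := by
      rw [max_eq_left (by linarith), min_eq_right (by norm_num)]
    rw [hs, mul_zero, add_zero]
    have h1 : x ≤ (x - 2*k)/(1+k) := by
      rw [le_div_iff₀ hk]; nlinarith [mul_nonpos_of_nonneg_of_nonpos hk0 (by linarith : x + 2 ≤ 0)]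
    rw [min_eq_left h1, max_eq_left (by linarith)]
  rcases le_or_gt x (-1) with h2 | h2
  · have hs : min 1 (max 0 (x+2)) = x + 2 := by
      rw [max_eq_right (by linarith), min_eq_right (by linarith)]
    rw [hs]
    have hd : (x + k*(x+2) - 2*k)/(1+k) = x := by
      field_simp; ring
    rw [hd]
    have h3 : x ≤ x + k*(x+2) := by nlinarith
    rw [min_eq_right h3, max_eq_left (by nlinarith)]
  · have hs : min 1 (max 0 (x+2)) = 1 := by
      rw [max_eq_right (by linarith), min_eq_left (by linarith)]
    rw [hs, mul_one]
    have h3 : (x + k - 2*k)/(1+k) ≤ x + k := by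
      rw [div_le_iff₀ hk]; nlinarith
    have h4 : (x + k - 2*k)/(1+k) ≤ x + k - k := by
      rw [div_le_iff₀ hk]; nlinarith
    rw [min_eq_right h3, max_eq_right h4]
    ring

lemma funA_funB (k u : ℝ) (hk0 : 0 ≤ k) (hk1 : k ≤ 1) : funA k (funB k u) = u := by
  have hk : (0:ℝ) < 1 + k := by linarith
  unfold funA funB sigA
  rcases le_or_gt u (-2) with h | h
  · have h1 : u ≤ (u - 2*k)/(1+k) := by
      rw [le_div_iff₀ hk]; nlinarith [mul_nonpos_of_nonneg_of_nonpos hk0 (by linarith : u + 2 ≤ 0)]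
    rw [min_eq_left h1, max_eq_left (by linarith)]
    have hs : min 1 (max 0 (u+2)) = 0 := by
      rw [max_eq_left (by linarith), min_eq_right (by norm_num)]
    rw [hs]; ring
  rcases le_or_gt u (-1 + k) with h2 | h2
  · have h1 : (u - 2*k)/(1+k) ≤ u := by
      rw [div_le_iff₀ hk]; nlinarith
    have h4 : u - k ≤ (u - 2*k)/(1+k) := by
      rw [le_div_iff₀ hk]; nlinarith
    rw [min_eq_right h1, max_eq_left h4]
    have hx1 : (u - 2*k)/(1+k) ≤ -1 := by
      rw [div_le_iff₀ hk]; nlinarith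
    have hx2 : -2 ≤ (u - 2*k)/(1+k) := by
      rw [le_div_iff₀ hk]; nlinarith
    have hs : min 1 (max 0 ((u - 2*k)/(1+k)+2)) = (u - 2*k)/(1+k) + 2 := by
      rw [max_eq_right (by linarith), min_eq_right (by linarith)]
    rw [hs]
    field_simp
    ring
  · have h1 : (u - 2*k)/(1+k) ≤ u := by
      rw [div_le_iff₀ hk]; nlinarith
    have h4 : (u - 2*k)/(1+k) ≤ u - k := by
      rw [div_le_iff₀ hk]; nlinarith
    rw [min_eq_right h1, max_eq_right h4]
    have hs : min 1 (max 0 (u - k + 2)) = 1 := by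
      rw [max_eq_right (by linarith), min_eq_left (by linarith)]
    rw [hs]; ring

def shiftE : ℂ ≃ₜ ℂ where
  toFun w := w + ((chiA w.im * sigA w.re : ℝ) : ℂ)
  invFun w := ((funB (chiA w.im) w.re : ℝ) : ℂ) + (w.im : ℂ) * Complex.I
  left_inv w := by
    have him : (w + ((chiA w.im * sigA w.re : ℝ) : ℂ)).im = w.im := by simp
    have hre : (w + ((chiA w.im * sigA w.re : ℝ) : ℂ)).re = funA (chiA w.im) w.re := by
      simp [funA]
    simp only [him, hre]
    rw [funB_funA _ _ (chiA_nonneg _) (chiA_le_one _)]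
    exact Complex.re_add_im w
  right_inv w := by
    set k := chiA w.im with hkdef
    have h1 : (((funB k w.re : ℝ) : ℂ) + (w.im : ℂ) * Complex.I).im = w.im := by simp
    have h2 : (((funB k w.re : ℝ) : ℂ) + (w.im : ℂ) * Complex.I).re = funB k w.re := by simp
    simp only [← hkdef, h1, h2]
    rw [show (((funB k w.re : ℝ) : ℂ) + (w.im : ℂ) * Complex.I) + ((k * sigA (funB k w.re) : ℝ) : ℂ)
        = (((funB k w.re + k * sigA (funB k w.re) : ℝ) : ℂ) + (w.im : ℂ) * Complex.I) by
      push_cast; ring]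
    rw [show funB k w.re + k * sigA (funB k w.re) = funA k (funB k w.re) from rfl]
    rw [funA_funB _ _ (chiA_nonneg _) (chiA_le_one _)]
    exact Complex.re_add_im w
  continuous_toFun := by
    apply Continuous.add continuous_id
    apply Continuous.comp Complex.continuous_ofReal
    exact (chiA_cont.comp Complex.continuous_im).mul (sigA_cont.comp Complex.continuous_re)
  continuous_invFun := by
    apply Continuous.add
    · apply Continuous.comp Complex.continuous_ofReal
      unfold funB
      apply Continuous.max
      · apply Continuous.min Complex.continuous_re
        apply Continuous.div
        · exact Complex.continuous_re.sub (continuous_const.mul (chiA_cont.comp Complex.continuous_im))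
        · exact continuous_const.add (chiA_cont.comp Complex.continuous_im)
        · intro w
          have := chiA_nonneg w.im
          intro hc; linarith [hc]
      · exact Complex.continuous_re.sub (chiA_cont.comp Complex.continuous_im)
    · exact (Complex.continuous_ofReal.comp Complex.continuous_im).mul continuous_const

lemma chiA_zero : chiA 0 = 1 := by unfold chiA; simp

lemma shiftE_nat (n : ℕ) : shiftE (n:ℂ) = (n:ℂ) + 1 := by
  show (n:ℂ) + ((chiA (n:ℂ).im * sigA (n:ℂ).re : ℝ) : ℂ) = (n:ℂ) + 1
  have h1 : (n:ℂ).im = 0 := by simp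
  have h2 : (n:ℂ).re = n := by simp
  rw [h1, h2, chiA_zero]
  have : sigA (n:ℝ) = 1 := by
    unfold sigA
    rw [max_eq_right (by positivity), min_eq_left (by
      have : (0:ℝ) ≤ n := Nat.cast_nonneg n
      linarith)]
  rw [this]; norm_num

lemma shiftE_neg1 : shiftE (-1 : ℂ) = 0 := by
  show (-1:ℂ) + ((chiA (-1:ℂ).im * sigA (-1:ℂ).re : ℝ) : ℂ) = 0
  have h1 : (-1:ℂ).im = 0 := by simp
  have h2 : (-1:ℂ).re = -1 := by simp
  rw [h1, h2, chiA_zero]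
  have : sigA (-1:ℝ) = 1 := by
    unfold sigA
    rw [max_eq_right (by norm_num), min_eq_left (by norm_num)]
  rw [this]; norm_num

def clampA (s : ℝ) : ℝ := min 1 (max 0 s)
lemma clampA_cont : Continuous clampA := continuous_const.min (continuous_const.max continuous_id)
lemma clampA_zero : clampA 0 = 0 := by unfold clampA; norm_num
lemma clampA_one : clampA 1 = 1 := by unfold clampA; norm_num
lemma clampA_nonpos (s : ℝ) (h : s ≤ 0) : clampA s = 0 := by
  unfold clampA; rw [max_eq_left h, min_eq_right (by norm_num)]

lemma main4 (b : ℂ) (hb : b.im ≠ 0) :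
    ∃ e : ℂ ≃ₜ ℂ, (∀ n : ℕ, e (n:ℂ) = (n:ℂ) + 1) ∧ e b = 0 := by
  set f : ℝ → ℝ := fun y => (-1 - b.re) * clampA (y / b.im) with hf
  have hfc : Continuous f := by
    apply continuous_const.mul
    exact clampA_cont.comp (continuous_id.div_const _)
  set g₂ : ℝ → ℝ := fun x => -b.im * clampA (-x) with hg
  have hgc : Continuous g₂ := by
    apply continuous_const.mul
    exact clampA_cont.comp continuous_neg
  refine ⟨(shearH f hfc).trans ((shearV g₂ hgc).trans shiftE), fun n => ?_, ?_⟩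
  · show shiftE (shearV g₂ hgc (shearH f hfc (n:ℂ))) = _
    have e1 : shearH f hfc (n:ℂ) = (n:ℂ) := by
      show (n:ℂ) + (f (n:ℂ).im : ℂ) = (n:ℂ)
      have : (n:ℂ).im = 0 := by simp
      rw [this, hf]
      simp [clampA_zero]
    rw [e1]
    have e2 : shearV g₂ hgc (n:ℂ) = (n:ℂ) := by
      show (n:ℂ) + (g₂ (n:ℂ).re : ℂ) * Complex.I = (n:ℂ)
      have h2 : (n:ℂ).re = n := by simp
      rw [h2, hg]
      simp only
      rw [clampA_nonpos _ (by simp : -(n:ℝ) ≤ 0)]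
      simp
    rw [e2, shiftE_nat]
  · show shiftE (shearV g₂ hgc (shearH f hfc b)) = 0
    have e1 : shearH f hfc b = b + ((-1 - b.re : ℝ) : ℂ) := by
      show b + (f b.im : ℂ) = _
      rw [hf]
      simp only
      rw [div_self hb, clampA_one, mul_one]
    set c : ℂ := b + ((-1 - b.re : ℝ) : ℂ) with hc
    have hcre : c.re = -1 := by simp [hc]
    have hcim : c.im = b.im := by simp [hc]
    have e2 : shearV g₂ hgc c = -1 := by
      show c + (g₂ c.re : ℂ) * Complex.I = -1
      rw [hcre, hg]
      simp only
      rw [show -(-1 : ℝ) = 1 by norm_num, clampA_one, mul_one]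
      apply Complex.ext
      · simp [hcre]
      · simp [hcim]
    rw [e1, e2, shiftE_neg1]

lemma exists_ambient (z₀ : ℂ) (hz : ∀ n : ℕ, z₀ ≠ (n:ℂ)) :
    ∃ e : ℂ ≃ₜ ℂ, (∀ n : ℕ, e (n:ℂ) = (n:ℂ) + 1) ∧ e z₀ = 0 := by
  by_cases him : z₀.im = 0
  · -- real non-natural: first shear up
    obtain ⟨δ, hδ, hgap⟩ := natC_gap z₀ hz
    set g₁ : ℝ → ℝ := fun x => max 0 (1 - |x - z₀.re| / δ) with hg1
    have hg1c : Continuous g₁ := by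
      apply continuous_const.max
      apply Continuous.sub continuous_const
      exact ((continuous_id.sub continuous_const).abs).div_const _
    have hE1n : ∀ n : ℕ, shearV g₁ hg1c (n:ℂ) = (n:ℂ) := by
      intro n
      show (n:ℂ) + (g₁ (n:ℂ).re : ℂ) * Complex.I = (n:ℂ)
      have h2 : (n:ℂ).re = n := by simp
      rw [h2, hg1]
      simp only
      have hd : dist z₀ ((n:ℕ):ℂ) = |(n:ℝ) - z₀.re| := by
        have hsub : z₀ - (n:ℂ) = ((z₀.re - (n:ℝ) : ℝ) : ℂ) := by
          apply Complex.ext <;> simp [him]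
        rw [Complex.dist_eq, hsub, Complex.norm_real, Real.norm_eq_abs, abs_sub_comm]
      have h3 : δ ≤ |(n:ℝ) - z₀.re| := by
        rw [← hd]; exact hgap n
      have h4 : max 0 (1 - |(n:ℝ) - z₀.re| / δ) = 0 := by
        apply max_eq_left
        rw [sub_nonpos, le_div_iff₀ hδ, one_mul]
        exact h3
      rw [show |(n:ℝ) - z₀.re| = |(n:ℝ) - z₀.re| from rfl] at h4
      rw [h4]
      simp
    have hE1z : shearV g₁ hg1c z₀ = z₀ + Complex.I := by
      show z₀ + (g₁ z₀.re : ℂ) * Complex.I = z₀ + Complex.I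
      rw [hg1]
      simp only
      rw [sub_self, abs_zero, zero_div, sub_zero, max_eq_right (by norm_num : (0:ℝ) ≤ 1)]
      simp
    have hbim : (z₀ + Complex.I).im ≠ 0 := by
      simp [him]
    obtain ⟨e', he'n, he'b⟩ := main4 (z₀ + Complex.I) hbim
    refine ⟨(shearV g₁ hg1c).trans e', fun n => ?_, ?_⟩
    · show e' (shearV g₁ hg1c (n:ℂ)) = _
      rw [hE1n n, he'n]
    · show e' (shearV g₁ hg1c z₀) = 0
      rw [hE1z, he'b]
  · exact main4 z₀ him

lemma fibre_homeo (z₀ : ℂ) :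
    Nonempty ((↥{w : ℂ | (∀ n:ℕ, w ≠ (n:ℂ)) ∧ z₀ ≠ w}) ≃ₜ (↥{w : ℂ | ∀ n:ℕ, w ≠ (n:ℂ)})) := by
  by_cases hz : ∀ n:ℕ, z₀ ≠ (n:ℂ)
  · obtain ⟨e, hen, hez⟩ := exists_ambient z₀ hz
    refine ⟨e.subtype fun w => ⟨?_, ?_⟩⟩
    · rintro ⟨hw1, hw2⟩ n hn
      cases n with
      | zero =>
        apply hw2
        have h0 : e w = e z₀ := by rw [hez]; exact_mod_cast hn
        exact (e.injective h0).symm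
      | succ k =>
        apply hw1 k
        have h0 : e w = e (k:ℂ) := by rw [hen k]; push_cast at hn ⊢; linear_combination hn
        exact e.injective h0
    · intro h
      constructor
      · intro n hwn
        apply h (n+1)
        rw [hwn, hen n]; push_cast; ring
      · intro hzw
        apply h 0
        rw [← hzw, hez]; norm_num
  · push_neg at hz
    obtain ⟨n, hn⟩ := hz
    refine ⟨Homeomorph.setCongr ?_⟩
    ext w
    simp only [mem_setOf_eq]
    constructor
    · rintro ⟨h1, _⟩; exact h1
    · intro h1
      exact ⟨h1, by rw [hn]; exact fun hc => h1 n hc.symm⟩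

def NCset : Set ℂ := {w : ℂ | ∃ n : ℕ, w = (n:ℂ)}

lemma NN_iff (w : ℂ) : (∀ n : ℕ, w ≠ (n:ℂ)) ↔ w ∉ NCset := by
  simp [NCset, not_exists]

lemma NCset_countable : NCset.Countable := by
  have : NCset = Set.range (fun n : ℕ => (n:ℂ)) := by
    ext w; simp [NCset, eq_comm, Set.mem_range]
  rw [this]
  exact Set.countable_range _

lemma rank_RC : 1 < Module.rank ℝ ℂ := by
  rw [Complex.rank_real_complex]; norm_num

lemma exists_ball_param (c : ℂ) (ρ : ℝ) (hρ : 0 < ρ) :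
    ∃ f : ℂ → ℂ, Continuous f ∧ Function.Injective f ∧ Set.range f = Metric.ball c ρ := by
  refine ⟨fun x => c + ρ • ((Homeomorph.unitBall x : ℂ)), ?_, ?_, ?_⟩
  · exact continuous_const.add ((continuous_subtype_val.comp
      (Homeomorph.unitBall (E := ℂ)).continuous).const_smul ρ)
  · intro x y hxy
    simp only [add_right_inj] at hxy
    have h2 : ((Homeomorph.unitBall x : ℂ)) = ((Homeomorph.unitBall y : ℂ)) :=
      smul_right_injective ℂ (ne_of_gt hρ) hxy
    exact (Homeomorph.unitBall (E := ℂ)).injective (Subtype.ext h2)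
  · ext y
    simp only [Set.mem_range, Metric.mem_ball]
    constructor
    · rintro ⟨x, rfl⟩
      have hx : ‖((Homeomorph.unitBall x : ℂ))‖ < 1 :=
        mem_ball_zero_iff.1 (Homeomorph.unitBall x).2
      rw [dist_eq_norm, add_sub_cancel_left, norm_smul, Real.norm_eq_abs, abs_of_pos hρ]
      nlinarith [norm_nonneg ((Homeomorph.unitBall x : ℂ))]
    · intro hy
      set u : ℂ := ρ⁻¹ • (y - c) with hu
      have hun : ‖u‖ < 1 := by
        rw [hu, norm_smul, Real.norm_eq_abs, abs_of_pos (inv_pos.2 hρ)]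
        rw [dist_eq_norm] at hy
        rw [inv_mul_lt_iff₀ hρ, mul_one]
        exact hy
      refine ⟨(Homeomorph.unitBall (E := ℂ)).symm ⟨u, mem_ball_zero_iff.2 hun⟩, ?_⟩
      have : ((Homeomorph.unitBall ((Homeomorph.unitBall (E := ℂ)).symm
          ⟨u, mem_ball_zero_iff.2 hun⟩) : ℂ)) = u := by
        rw [Homeomorph.apply_symm_apply]
      rw [this, hu, smul_inv_smul₀ (ne_of_gt hρ)]
      ring

lemma pathconn_ball_diff (c : ℂ) (ρ : ℝ) (hρ : 0 < ρ) (C : Set ℂ) (hC : C.Countable) :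
    IsPathConnected (Metric.ball c ρ \ C) := by
  obtain ⟨f, hfc, hfi, hfr⟩ := exists_ball_param c ρ hρ
  have hpre : (f ⁻¹' C).Countable := hC.preimage hfi
  have hP : IsPathConnected ((f ⁻¹' C)ᶜ) :=
    hpre.isPathConnected_compl_of_one_lt_rank rank_RC
  have himg : f '' ((f ⁻¹' C)ᶜ) = Metric.ball c ρ \ C := by
    ext y
    constructor
    · rintro ⟨x, hx, rfl⟩
      exact ⟨hfr ▸ Set.mem_range_self x, hx⟩
    · rintro ⟨hy1, hy2⟩
      obtain ⟨x, rfl⟩ := hfr.symm ▸ hy1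
      exact ⟨x, hy2, rfl⟩
  exact himg ▸ hP.image hfc

lemma nonempty_ball_diff (c : ℂ) (ρ : ℝ) (hρ : 0 < ρ) (C : Set ℂ) (hC : C.Countable) :
    (Metric.ball c ρ \ C).Nonempty := by
  obtain ⟨x, hx, -⟩ := pathconn_ball_diff c ρ hρ C hC
  exact ⟨x, hx⟩

lemma pathconn_ext (R : ℝ) (hR : 0 < R) :
    IsPathConnected ({v : ℂ | R < dist v 0} \ NCset) := by
  set C : Set ℂ := {0} ∪ Set.range (fun n : ℕ => ((n:ℂ))⁻¹) with hCdef
  have hC : C.Countable := (Set.countable_singleton 0).union (Set.countable_range _)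
  have hP := pathconn_ball_diff 0 R⁻¹ (inv_pos.2 hR) C hC
  have hcont : ContinuousOn (fun z : ℂ => z⁻¹) (Metric.ball 0 R⁻¹ \ C) := by
    apply ContinuousOn.inv₀ continuousOn_id
    intro z hz
    exact fun h => hz.2 (Or.inl h)
  have himg : (fun z : ℂ => z⁻¹) '' (Metric.ball 0 R⁻¹ \ C) = {v : ℂ | R < dist v 0} \ NCset := by
    ext v
    constructor
    · rintro ⟨z, ⟨hz1, hz2⟩, rfl⟩
      have hz0 : z ≠ 0 := fun h => hz2 (Or.inl h)
      have hzn : ‖z‖ < R⁻¹ := by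
        rw [Metric.mem_ball, dist_eq_norm, sub_zero] at hz1; exact hz1
      have hznpos : 0 < ‖z‖ := norm_pos_iff.2 hz0
      constructor
      · show R < dist z⁻¹ 0
        rw [dist_eq_norm, sub_zero, norm_inv]
        have := (inv_lt_inv₀ (inv_pos.2 hR) hznpos).2
        calc R = (R⁻¹)⁻¹ := (inv_inv R).symm
          _ < ‖z‖⁻¹ := by
              apply inv_strictAnti₀ hznpos hzn
      · intro hv
        obtain ⟨n, hn⟩ := hv
        rcases Nat.eq_zero_or_pos n with rfl | hnpos
        · simp only [Nat.cast_zero] at hn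
          have : z⁻¹ = 0 := hn
          exact hz0 (inv_eq_zero.1 this)
        · apply hz2
          right
          refine ⟨n, ?_⟩
          show ((n:ℂ))⁻¹ = z
          have hzi : z⁻¹ = (n:ℂ) := hn
          rw [← hzi, inv_inv]
    · rintro ⟨hv1, hv2⟩
      simp only [Set.mem_setOf_eq] at hv1
      have hv0 : v ≠ 0 := by
        intro h; rw [h] at hv1; simp at hv1; linarith
      refine ⟨v⁻¹, ⟨?_, ?_⟩, inv_inv v⟩
      · rw [Metric.mem_ball, dist_eq_norm, sub_zero, norm_inv]
        rw [dist_eq_norm, sub_zero] at hv1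
        exact inv_strictAnti₀ hR hv1
      · rintro (h | ⟨n, hn⟩)
        · have : v⁻¹ = 0 := h
          exact hv0 (by simpa using (inv_eq_zero.1 this))
        · rcases Nat.eq_zero_or_pos n with rfl | hnpos
          · have : ((0:ℕ):ℂ)⁻¹ = v⁻¹ := hn
            simp only [Nat.cast_zero, inv_zero] at this
            exact hv0 (inv_eq_zero.1 this.symm)
          · apply hv2
            refine ⟨n, ?_⟩
            have h2 : ((n:ℂ))⁻¹ = v⁻¹ := hn
            have := congrArg (fun x : ℂ => x⁻¹) h2
            simpa [inv_inv] using this.symm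
  exact himg ▸ hP.image' hcont

def NN (w : ℂ) : Prop := ∀ n : ℕ, w ≠ (n:ℂ)

lemma NN_notin (w : ℂ) (h : NN w) : w ∉ NCset := (NN_iff w).1 h
lemma notin_NN (w : ℂ) (h : w ∉ NCset) : NN w := (NN_iff w).2 h

/-- interface for the trivialization data -/
structure PSetup where
  D : Set ℂ
  r : ℝ
  hr : 0 < r
  hr8 : r ≤ 1/8
  hrD : Metric.closedBall (0:ℂ) r ⊆ D
  h : ℂ → ℂ → ℂ
  g : ℂ → ℂ → ℂ
  hmem : ∀ z ∈ D, ∀ w, NN w → w ≠ z → NN (h z w)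
  gmem : ∀ z ∈ D, ∀ v, NN v → NN (g z v) ∧ g z v ≠ z
  hgh : ∀ z ∈ D, ∀ w, NN w → w ≠ z → g z (h z w) = w
  hhg : ∀ z ∈ D, ∀ v, NN v → h z (g z v) = v
  contHw : ∀ z ∈ D, ContinuousOn (h z) {w | NN w ∧ w ≠ z}
  contGw : ∀ z ∈ D, ContinuousOn (g z) {v | NN v}
  contH : ∀ w₀, NN w₀ → ContinuousOn (fun z => h z w₀) {z | z ∈ D ∧ w₀ ≠ z}
  contG : ∀ v₀, NN v₀ → ContinuousOn (fun z => g z v₀) D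
  escape_h : ∀ K : Set ℂ, IsCompact K → (∀ v ∈ K, NN v) →
    ∃ δ > 0, ∃ R, ∀ z ∈ Metric.closedBall (0:ℂ) r, ∀ w, NN w → w ≠ z → h z w ∈ K →
      (∀ n:ℕ, δ ≤ dist w (n:ℂ)) ∧ δ ≤ dist w z ∧ dist w 0 ≤ R
  escape_gU : ∀ K : Set ℂ, IsCompact K →
      (∀ v ∈ K, NN v ∧ ∀ z ∈ Metric.closedBall (0:ℂ) r, v ≠ z) →
    ∃ δ > 0, ∃ R, ∀ z ∈ Metric.closedBall (0:ℂ) r, ∀ v, NN v → g z v ∈ K →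
      (∀ n:ℕ, δ ≤ dist v (n:ℂ)) ∧ dist v 0 ≤ R

namespace PSetup

variable (s : PSetup)

/-- per-z escape for g, internal -/
lemma escape_g {z : ℂ} (hzD : z ∈ s.D) (K : Set ℂ) (hK : IsCompact K)
    (hKF : ∀ v ∈ K, NN v ∧ v ≠ z) :
    ∃ δ > 0, ∃ R, ∀ v, NN v → s.g z v ∈ K →
      (∀ n:ℕ, δ ≤ dist v (n:ℂ)) ∧ dist v 0 ≤ R := by
  have hKsub : K ⊆ {w | NN w ∧ w ≠ z} := fun v hv => hKF v hv
  have hVK : IsCompact (s.h z '' K) := hK.image_of_continuousOn ((s.contHw z hzD).mono hKsub)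
  have hVKsub : s.h z '' K ⊆ {v | NN v} := by
    rintro - ⟨w, hw, rfl⟩
    exact s.hmem z hzD w (hKF w hw).1 (hKF w hw).2
  have hopen : IsOpen {v : ℂ | NN v} := by
    have : {v : ℂ | NN v} = {w : ℂ | ∀ n : ℕ, w ≠ (n:ℂ)} := rfl
    rw [this]; exact open_nonnat
  obtain ⟨δ, hδ, hth⟩ := hVK.exists_thickening_subset_open hopen hVKsub
  obtain ⟨R, hR⟩ := hVK.isBounded.subset_closedBall 0
  refine ⟨δ, hδ, R, fun v hv hgv => ?_⟩
  have hvVK : v ∈ s.h z '' K := by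
    refine ⟨s.g z v, hgv, s.hhg z hzD v hv⟩
  constructor
  · intro n
    by_contra hlt
    push_neg at hlt
    have : (n:ℂ) ∈ Metric.thickening δ (s.h z '' K) := by
      rw [Metric.mem_thickening_iff]
      exact ⟨v, hvVK, by rw [dist_comm] at hlt; exact hlt⟩
    exact (hth this) n rfl
  · exact hR hvVK

end PSetup

/-- separation dichotomy: preconnected set avoiding a sphere and meeting the ball -/
lemma subset_ball_of_avoid {S : Set ℂ} {c : ℂ} {ε : ℝ} (hS : IsPreconnected S)
    (havoid : ∀ x ∈ S, dist x c ≠ ε) (hmeet : ∃ x ∈ S, dist x c < ε) :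
    ∀ x ∈ S, dist x c < ε := by
  have hsub : S ⊆ Metric.ball c ε ∪ (Metric.closedBall c ε)ᶜ := by
    intro x hx
    rcases lt_trichotomy (dist x c) ε with h | h | h
    · exact Or.inl h
    · exact absurd h (havoid x hx)
    · exact Or.inr (by simp only [Set.mem_compl_iff, Metric.mem_closedBall, not_le]; exact h)
  have hdisj : Disjoint (Metric.ball c ε) ((Metric.closedBall c ε)ᶜ) :=
    Set.disjoint_left.2 fun x hx hx2 => hx2 (Metric.ball_subset_closedBall hx)
  have := hS.subset_left_of_subset_union Metric.isOpen_ball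
    (Metric.isClosed_closedBall.isOpen_compl) hdisj hsub
    (by obtain ⟨x, hx1, hx2⟩ := hmeet; exact ⟨x, hx1, hx2⟩)
  intro x hx
  exact this hx


lemma good_eps (z b : ℂ) (ε : ℝ) (hε : 0 < ε) :
    ∃ ε' > 0, ε' ≤ ε ∧ ε' < 1 ∧ ∀ x : ℂ, dist x b = ε' → (NN x ∧ x ≠ z) := by
  obtain ⟨gb, hgb0, hgb⟩ : ∃ gb > 0, ∀ n : ℕ, dist ((n:ℂ)) b = 0 ∨ gb ≤ dist ((n:ℂ)) b := by
    by_cases hb : ∃ n : ℕ, b = (n:ℂ)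
    · obtain ⟨m, rfl⟩ := hb
      refine ⟨1, one_pos, fun n => ?_⟩
      rcases eq_or_ne n m with rfl | hne
      · exact Or.inl (dist_self _)
      · exact Or.inr (natC_dist hne)
    · push_neg at hb
      obtain ⟨δ, hδ, hgap⟩ := natC_gap b hb
      exact ⟨δ, hδ, fun n => Or.inr (by rw [dist_comm]; exact hgap n)⟩
  set m₀ := min (min ε gb) 1 with hm₀
  have hm₀pos : 0 < m₀ := lt_min (lt_min hε hgb0) one_pos
  have hm₀ε : m₀ ≤ ε := le_trans (min_le_left _ _) (min_le_left _ _)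
  have hm₀gb : m₀ ≤ gb := le_trans (min_le_left _ _) (min_le_right _ _)
  have hm₀1 : m₀ ≤ 1 := min_le_right _ _
  have key : ∀ e : ℝ, 0 < e → e ≤ m₀/2 → e ≠ dist z b →
      (e ≤ ε ∧ e < 1 ∧ ∀ x : ℂ, dist x b = e → (NN x ∧ x ≠ z)) := by
    intro e he0 hem hez
    refine ⟨by linarith, by linarith, fun x hx => ⟨?_, ?_⟩⟩
    · rintro n rfl
      rcases hgb n with h | h
      · rw [h] at hx; linarith
      · rw [hx] at h; linarith
    · rintro rfl
      exact hez hx.symm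
  by_cases hcase : m₀/2 = dist z b
  · obtain ⟨h1, h2, h3⟩ := key (m₀/4) (by linarith) (by linarith)
      (by rw [← hcase]; intro h; linarith)
    exact ⟨m₀/4, by linarith, h1, h2, h3⟩
  · obtain ⟨h1, h2, h3⟩ := key (m₀/2) (by linarith) (le_refl _) hcase
    exact ⟨m₀/2, by linarith, h1, h2, h3⟩

lemma pigeon {P : ℕ → ℕ → Prop} (N : ℕ) (hP : ∀ j, ∃ n, n ≤ N ∧ P j n) :
    ∃ m, m ≤ N ∧ ∀ J : ℕ, ∃ j, J ≤ j ∧ P j m := by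
  choose f hf1 hf2 using hP
  by_contra hc
  push_neg at hc
  choose J hJ using hc
  set j₀ := (Finset.range (N+1)).sup (fun m => if hm : m ≤ N then J m hm else 0) with hj₀
  have h1 : f j₀ ≤ N := hf1 j₀
  have h2 : P j₀ (f j₀) := hf2 j₀
  have h3 : (fun m => if hm : m ≤ N then J m hm else 0) (f j₀) ≤ j₀ :=
    Finset.le_sup (f := fun m => if hm : m ≤ N then J m hm else 0)
      (Finset.mem_range.2 (Nat.lt_succ_of_le h1))
  simp only [dif_pos h1] at h3
  exact hJ (f j₀) h1 j₀ h3 h2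

lemma const_real {t : ℝ} (ht : 0 ≤ t) {f : ℝ → ℂ} (hf : ContinuousOn f (Set.Icc 0 t))
    {c : ℂ} {ε : ℝ} (havoid : ∀ x ∈ Set.Icc (0:ℝ) t, dist (f x) c ≠ ε)
    (h0 : dist (f 0) c < ε) : dist (f t) c < ε := by
  have himg : IsPreconnected (f '' Set.Icc 0 t) := (isPreconnected_Icc).image f hf
  have := subset_ball_of_avoid himg
    (by rintro x ⟨y, hy, rfl⟩; exact havoid y hy)
    ⟨f 0, ⟨0, Set.mem_Icc.2 ⟨le_refl _, ht⟩, rfl⟩, h0⟩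
  exact this (f t) ⟨t, Set.mem_Icc.2 ⟨ht, le_refl _⟩, rfl⟩

namespace PSetup

variable (s : PSetup)

def LimH (z a c : ℂ) : Prop :=
  ∀ ε > 0, ∃ ρ > 0, ∀ w, NN w → w ≠ z → dist w a < ρ → dist (s.h z w) c < ε
def OutH (z a : ℂ) : Prop :=
  ∀ B : ℝ, ∃ ρ > 0, ∀ w, NN w → w ≠ z → dist w a < ρ → B < dist (s.h z w) 0
def LimG (z c b : ℂ) : Prop :=
  ∀ ε > 0, ∃ ρ > 0, ∀ v, NN v → dist v c < ρ → dist (s.g z v) b < ε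
def OutG (z c : ℂ) : Prop :=
  ∀ B : ℝ, ∃ ρ > 0, ∀ v, NN v → dist v c < ρ → B < dist (s.g z v) 0
def LimGinf (z b : ℂ) : Prop :=
  ∀ ε > 0, ∃ R : ℝ, ∀ v, NN v → R < dist v 0 → dist (s.g z v) b < ε
def OutGinf (z : ℂ) : Prop :=
  ∀ B : ℝ, ∃ R : ℝ, ∀ v, NN v → R < dist v 0 → B < dist (s.g z v) 0

end PSetup

/-- every punctured neighbourhood in a fibre contains a fibre point -/
lemma exists_ptF (z a : ℂ) (ρ : ℝ) (hρ : 0 < ρ) :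
    ∃ w, NN w ∧ w ≠ z ∧ dist w a < ρ := by
  obtain ⟨w, hw1, hw2⟩ := nonempty_ball_diff a ρ hρ (NCset ∪ {z})
    (NCset_countable.union (Set.countable_singleton z))
  refine ⟨w, notin_NN w (fun h => hw2 (Or.inl h)), fun h => hw2 (Or.inr h), ?_⟩
  rwa [Metric.mem_ball] at hw1

namespace PSetup
variable (s : PSetup)

/-- anchored limit, h-side -/
lemma anchorH {z a c : ℂ} (hz : z ∈ Metric.closedBall (0:ℂ) s.r)
    (ha : (∃ n:ℕ, a = (n:ℂ)) ∨ a = z)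
    (hanch : ∀ ρ > 0, ∀ ε > 0, ∃ w, NN w ∧ w ≠ z ∧ dist w a < ρ ∧ dist (s.h z w) c < ε) :
    s.LimH z a c := by
  intro ε hε
  obtain ⟨ε', hε'0, hε'ε, hε'1, hε'good⟩ := good_eps z c ε hε
  set K := Metric.sphere c ε' with hK
  have hKc : IsCompact K := isCompact_sphere c ε'
  have hKNN : ∀ v ∈ K, NN v := fun v hv => (hε'good v (Metric.mem_sphere.1 hv)).1
  obtain ⟨δ, hδ0, R, hesc⟩ := s.escape_h K hKc hKNN
  set ρ := min δ 1 with hρdef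
  have hρ0 : 0 < ρ := lt_min hδ0 one_pos
  obtain ⟨w₁, hw₁NN, hw₁z, hw₁a, hw₁c⟩ := hanch ρ hρ0 ε' hε'0
  -- the image of the punctured ball avoids the sphere
  have havoid : ∀ w, NN w → w ≠ z → dist w a < ρ → dist (s.h z w) c ≠ ε' := by
    intro w hwNN hwz hwa heq
    have hK' : s.h z w ∈ K := Metric.mem_sphere.2 heq
    obtain ⟨hd1, hd2, _⟩ := hesc z hz w hwNN hwz hK'
    rcases ha with ⟨n, rfl⟩ | rfl
    · exact absurd hwa (not_lt.2 (le_trans (min_le_left _ _) (hd1 n)))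
    · exact absurd hwa (not_lt.2 (le_trans (min_le_left _ _) hd2))
  -- connected source
  set S := Metric.ball a ρ \ (NCset ∪ {z}) with hS
  have hSconn : IsPreconnected S :=
    (pathconn_ball_diff a ρ hρ0 _ (NCset_countable.union (Set.countable_singleton z))).isConnected.isPreconnected
  have hSsub : S ⊆ {w | NN w ∧ w ≠ z} := by
    rintro w ⟨hw1, hw2⟩
    exact ⟨notin_NN w (fun h => hw2 (Or.inl h)), fun h => hw2 (Or.inr h)⟩
  have hDz : z ∈ s.D := s.hrD hz
  have himgconn : IsPreconnected (s.h z '' S) :=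
    hSconn.image _ ((s.contHw z hDz).mono hSsub)
  have hmem : ∀ w ∈ S, (NN w ∧ w ≠ z) ∧ dist w a < ρ := by
    rintro w ⟨hw1, hw2⟩
    exact ⟨⟨notin_NN w (fun h => hw2 (Or.inl h)), fun h => hw2 (Or.inr h)⟩,
      Metric.mem_ball.1 hw1⟩
  have hall := subset_ball_of_avoid himgconn
    (by
      rintro x ⟨w, hwS, rfl⟩
      obtain ⟨⟨h1, h2⟩, h3⟩ := hmem w hwS
      exact havoid w h1 h2 h3)
    ⟨s.h z w₁, ⟨w₁, ⟨Metric.mem_ball.2 hw₁a, by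
      rintro (⟨n, hn⟩ | hc)
      · exact hw₁NN n hn
      · exact hw₁z hc⟩, rfl⟩, hw₁c⟩
  refine ⟨ρ, hρ0, fun w hwNN hwz hwa => ?_⟩
  have hwS : w ∈ S := ⟨Metric.mem_ball.2 hwa, by
    rintro (⟨n, hn⟩ | hc)
    · exact hwNN n hn
    · exact hwz hc⟩
  exact lt_of_lt_of_le (hall _ ⟨w, hwS, rfl⟩) hε'ε

end PSetup

namespace PSetup

variable (s : PSetup)

/-- anchored limit, g-side at a natural point -/
lemma anchorG {z c b : ℂ} (hz : z ∈ Metric.closedBall (0:ℂ) s.r) (hc : ∃ n:ℕ, c = (n:ℂ))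
    (hanch : ∀ ρ > 0, ∀ ε > 0, ∃ v, NN v ∧ dist v c < ρ ∧ dist (s.g z v) b < ε) :
    s.LimG z c b := by
  intro ε hε
  obtain ⟨ε', hε'0, hε'ε, hε'1, hε'good⟩ := good_eps z b ε hε
  set K := Metric.sphere b ε' with hK
  have hDz : z ∈ s.D := s.hrD hz
  obtain ⟨δ, hδ0, R, hesc⟩ := s.escape_g hDz K (isCompact_sphere b ε')
    (fun v hv => hε'good v (Metric.mem_sphere.1 hv))
  set ρ := min δ 1 with hρdef
  have hρ0 : 0 < ρ := lt_min hδ0 one_pos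
  obtain ⟨v₁, hv₁NN, hv₁c, hv₁b⟩ := hanch ρ hρ0 ε' hε'0
  have havoid : ∀ v, NN v → dist v c < ρ → dist (s.g z v) b ≠ ε' := by
    intro v hvNN hvc heq
    obtain ⟨hd1, _⟩ := hesc v hvNN (Metric.mem_sphere.2 heq)
    obtain ⟨n, rfl⟩ := hc
    exact absurd hvc (not_lt.2 (le_trans (min_le_left _ _) (hd1 n)))
  set S := Metric.ball c ρ \ NCset with hS
  have hSconn : IsPreconnected S :=
    (pathconn_ball_diff c ρ hρ0 _ NCset_countable).isConnected.isPreconnected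
  have hSsub : S ⊆ {v | NN v} := fun v hv => notin_NN v hv.2
  have himgconn : IsPreconnected (s.g z '' S) :=
    hSconn.image _ ((s.contGw z hDz).mono hSsub)
  have hall := subset_ball_of_avoid himgconn
    (by
      rintro x ⟨v, hvS, rfl⟩
      exact havoid v (notin_NN v hvS.2) (Metric.mem_ball.1 hvS.1))
    ⟨s.g z v₁, ⟨v₁, ⟨Metric.mem_ball.2 hv₁c, NN_notin v₁ hv₁NN⟩, rfl⟩, hv₁b⟩
  refine ⟨ρ, hρ0, fun v hvNN hvc => ?_⟩
  exact lt_of_lt_of_le (hall _ ⟨v, ⟨Metric.mem_ball.2 hvc, NN_notin v hvNN⟩, rfl⟩) hε'ε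

/-- anchored limit, g-side at infinity -/
lemma anchorGinf {z b : ℂ} (hz : z ∈ Metric.closedBall (0:ℂ) s.r)
    (hanch : ∀ R : ℝ, ∀ ε > 0, ∃ v, NN v ∧ R < dist v 0 ∧ dist (s.g z v) b < ε) :
    s.LimGinf z b := by
  intro ε hε
  obtain ⟨ε', hε'0, hε'ε, hε'1, hε'good⟩ := good_eps z b ε hε
  set K := Metric.sphere b ε' with hK
  have hDz : z ∈ s.D := s.hrD hz
  obtain ⟨δ, hδ0, R₀, hesc⟩ := s.escape_g hDz K (isCompact_sphere b ε')
    (fun v hv => hε'good v (Metric.mem_sphere.1 hv))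
  set R₁ := max R₀ 1 with hR₁
  have hR₁0 : (0:ℝ) < R₁ := lt_of_lt_of_le one_pos (le_max_right _ _)
  obtain ⟨v₁, hv₁NN, hv₁R, hv₁b⟩ := hanch R₁ ε' hε'0
  have havoid : ∀ v, NN v → R₁ < dist v 0 → dist (s.g z v) b ≠ ε' := by
    intro v hvNN hvR heq
    obtain ⟨_, hd2⟩ := hesc v hvNN (Metric.mem_sphere.2 heq)
    exact absurd hvR (not_lt.2 (le_trans hd2 (le_max_left _ _)))
  set S := {v : ℂ | R₁ < dist v 0} \ NCset with hS
  have hSconn : IsPreconnected S :=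
    (pathconn_ext R₁ hR₁0).isConnected.isPreconnected
  have hSsub : S ⊆ {v | NN v} := fun v hv => notin_NN v hv.2
  have himgconn : IsPreconnected (s.g z '' S) :=
    hSconn.image _ ((s.contGw z hDz).mono hSsub)
  have hall := subset_ball_of_avoid himgconn
    (by
      rintro x ⟨v, hvS, rfl⟩
      exact havoid v (notin_NN v hvS.2) hvS.1)
    ⟨s.g z v₁, ⟨v₁, ⟨hv₁R, NN_notin v₁ hv₁NN⟩, rfl⟩, hv₁b⟩
  refine ⟨R₁, fun v hvNN hvR => ?_⟩
  exact lt_of_lt_of_le (hall _ ⟨v, ⟨hvR, NN_notin v hvNN⟩, rfl⟩) hε'ε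

/-- compact test sets -/
lemma testK_compact (B : ℝ) (j : ℕ) (z : ℂ) :
    IsCompact {x : ℂ | dist x 0 ≤ B ∧ (∀ n:ℕ, 1/(j+1:ℝ) ≤ dist x (n:ℂ)) ∧ 1/(j+1:ℝ) ≤ dist x z} := by
  apply IsCompact.of_isClosed_subset (isCompact_closedBall (0:ℂ) B)
  · have : {x : ℂ | dist x 0 ≤ B ∧ (∀ n:ℕ, 1/(j+1:ℝ) ≤ dist x (n:ℂ)) ∧ 1/(j+1:ℝ) ≤ dist x z}
        = {x : ℂ | dist x 0 ≤ B} ∩ ((⋂ n : ℕ, {x : ℂ | 1/(j+1:ℝ) ≤ dist x (n:ℂ)}) ∩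
          {x : ℂ | 1/(j+1:ℝ) ≤ dist x z}) := by
      ext x
      simp only [Set.mem_setOf_eq, Set.mem_inter_iff, Set.mem_iInter]
    rw [this]
    refine IsClosed.inter ?_ (IsClosed.inter ?_ ?_)
    · exact isClosed_le (continuous_id.dist continuous_const) continuous_const
    · exact isClosed_iInter fun n => isClosed_le continuous_const (continuous_id.dist continuous_const)
    · exact isClosed_le continuous_const (continuous_id.dist continuous_const)
  · intro x hx
    exact Metric.mem_closedBall.2 (by simpa [dist_eq_norm] using hx.1)

lemma one_div_succ_pos (j : ℕ) : (0:ℝ) < 1/(j+1:ℝ) := by positivity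

lemma testKh_compact (B : ℝ) (j : ℕ) :
    IsCompact {x : ℂ | dist x 0 ≤ B ∧ (∀ n:ℕ, 1/(j+1:ℝ) ≤ dist x (n:ℂ))} := by
  apply IsCompact.of_isClosed_subset (isCompact_closedBall (0:ℂ) B)
  · have : {x : ℂ | dist x 0 ≤ B ∧ (∀ n:ℕ, 1/(j+1:ℝ) ≤ dist x (n:ℂ))}
        = {x : ℂ | dist x 0 ≤ B} ∩ (⋂ n : ℕ, {x : ℂ | 1/(j+1:ℝ) ≤ dist x (n:ℂ)}) := by
      ext x
      simp only [Set.mem_setOf_eq, Set.mem_inter_iff, Set.mem_iInter]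
    rw [this]
    refine IsClosed.inter ?_ ?_
    · exact isClosed_le (continuous_id.dist continuous_const) continuous_const
    · exact isClosed_iInter fun n => isClosed_le continuous_const (continuous_id.dist continuous_const)
  · intro x hx
    exact Metric.mem_closedBall.2 (by simpa [dist_eq_norm] using hx.1)

/-- dichotomy for h-ends -/
lemma dichotH {z a : ℂ} (hz : z ∈ Metric.closedBall (0:ℂ) s.r)
    (ha : (∃ n:ℕ, a = (n:ℂ)) ∨ a = z) :
    s.OutH z a ∨ ∃ c, (∃ n:ℕ, c = (n:ℂ)) ∧ s.LimH z a c := by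
  by_cases hout : s.OutH z a
  · exact Or.inl hout
  right
  unfold OutH at hout
  push_neg at hout
  obtain ⟨B, hB⟩ := hout
  have hwit : ∀ j : ℕ, ∃ w, (NN w ∧ w ≠ z ∧ dist w a < 1/(j+1:ℝ)) ∧
      ∃ n : ℕ, (n:ℝ) < B + 1 ∧ dist (s.h z w) (n:ℂ) < 1/(j+1:ℝ) := by
    intro j
    set Kj := {x : ℂ | dist x 0 ≤ B ∧ (∀ n:ℕ, 1/(j+1:ℝ) ≤ dist x (n:ℂ))} with hKj
    have hKjNN : ∀ v ∈ Kj, NN v := by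
      intro v hv n hvn
      have := hv.2 n
      rw [hvn, dist_self] at this
      linarith [one_div_succ_pos j]
    obtain ⟨δ, hδ0, R, hesc⟩ := s.escape_h Kj (testKh_compact B j) hKjNN
    obtain ⟨w, hwNN, hwz, hwa, hwB⟩ := hB (min δ (1/(j+1:ℝ))) (lt_min hδ0 (one_div_succ_pos j))
    have hnotK : s.h z w ∉ Kj := by
      intro hK
      obtain ⟨hd1, hd2, -⟩ := hesc z hz w hwNN hwz hK
      rcases ha with ⟨n, rfl⟩ | rfl
      · exact absurd hwa (not_lt.2 (le_trans (min_le_left _ _) (hd1 n)))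
      · exact absurd hwa (not_lt.2 (le_trans (min_le_left _ _) hd2))
    rw [hKj] at hnotK
    simp only [Set.mem_setOf_eq, not_and, not_forall, not_le] at hnotK
    obtain ⟨n, hn⟩ := hnotK hwB
    refine ⟨w, ⟨hwNN, hwz, lt_of_lt_of_le hwa (min_le_right _ _)⟩, n, ?_, hn⟩
    have h1 : (n:ℝ) = dist ((n:ℂ)) 0 := (natC_dist0 n).symm
    have h2 : dist ((n:ℂ)) 0 ≤ dist ((n:ℂ)) (s.h z w) + dist (s.h z w) 0 := dist_triangle _ _ _
    rw [dist_comm ((n:ℂ)) (s.h z w)] at h2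
    have h3 : 1/(j+1:ℝ) ≤ 1 := by
      rw [div_le_one (by positivity)]
      have : (0:ℝ) ≤ j := Nat.cast_nonneg j
      linarith
    linarith
  choose w hw n hn1 hn2 using hwit
  have hBnn : (0:ℝ) ≤ B := le_trans dist_nonneg (hB 1 one_pos).choose_spec.2.2.2
  set N₀ := ⌈B⌉₊ + 1 with hN₀
  have hpig := pigeon (P := fun j m => dist (s.h z (w j)) ((m:ℕ):ℂ) < 1/(j+1:ℝ)) N₀ ?_
  · obtain ⟨m, hmN, hm⟩ := hpig
    refine ⟨(m:ℂ), ⟨m, rfl⟩, s.anchorH hz ha ?_⟩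
    intro ρ hρ ε hε
    obtain ⟨J₁, hJ₁⟩ := exists_nat_one_div_lt (lt_min hρ hε : (0:ℝ) < min ρ ε)
    obtain ⟨j, hjJ, hjm⟩ := hm J₁
    have hj1 : 1/(j+1:ℝ) ≤ 1/(J₁+1:ℝ) := by
      apply one_div_le_one_div_of_le (by positivity)
      have : (J₁:ℝ) ≤ j := Nat.cast_le.2 hjJ
      linarith
    have hsm : 1/(j+1:ℝ) < min ρ ε := lt_of_le_of_lt hj1 hJ₁
    obtain ⟨hwNN, hwz, hwa⟩ := hw j
    exact ⟨w j, hwNN, hwz, lt_of_lt_of_le (lt_trans hwa hsm) (min_le_left _ _),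
      lt_of_lt_of_le (lt_trans hjm hsm) (min_le_right _ _)⟩
  · intro j
    refine ⟨n j, ?_, hn2 j⟩
    have h1 := hn1 j
    have h2 : B ≤ (⌈B⌉₊:ℝ) := Nat.le_ceil B
    have : ((n j : ℕ):ℝ) < (N₀:ℝ) + 1 := by
      rw [hN₀]
      push_cast
      linarith
    have := (Nat.cast_lt (α := ℝ)).1 (by exact_mod_cast this)
    omega

/-- dichotomy for g-ends at a natural point -/
lemma dichotG {z c : ℂ} (hz : z ∈ Metric.closedBall (0:ℂ) s.r) (hc : ∃ n:ℕ, c = (n:ℂ)) :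
    s.OutG z c ∨ ∃ b, ((∃ n:ℕ, b = (n:ℂ)) ∨ b = z) ∧ s.LimG z c b := by
  by_cases hout : s.OutG z c
  · exact Or.inl hout
  right
  unfold OutG at hout
  push_neg at hout
  obtain ⟨B, hB⟩ := hout
  have hDz : z ∈ s.D := s.hrD hz
  have hwit : ∀ j : ℕ, ∃ v, (NN v ∧ dist v c < 1/(j+1:ℝ)) ∧
      ∃ k : ℕ, k ≤ ⌈B⌉₊ + 2 ∧
        (if k = 0 then dist (s.g z v) z < 1/(j+1:ℝ)
         else dist (s.g z v) ((k-1:ℕ):ℂ) < 1/(j+1:ℝ)) := by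
    intro j
    set Kj := {x : ℂ | dist x 0 ≤ B ∧ (∀ n:ℕ, 1/(j+1:ℝ) ≤ dist x (n:ℂ)) ∧ 1/(j+1:ℝ) ≤ dist x z}
      with hKj
    have hKjF : ∀ v ∈ Kj, NN v ∧ v ≠ z := by
      intro v hv
      constructor
      · intro nn hvn
        have := hv.2.1 nn
        rw [hvn, dist_self] at this
        linarith [one_div_succ_pos j]
      · intro hvz
        have := hv.2.2
        rw [hvz, dist_self] at this
        linarith [one_div_succ_pos j]
    obtain ⟨δ, hδ0, R, hesc⟩ := s.escape_g hDz Kj (testK_compact B j z) hKjF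
    obtain ⟨v, hvNN, hvc, hvB⟩ := hB (min δ (1/(j+1:ℝ))) (lt_min hδ0 (one_div_succ_pos j))
    have hnotK : s.g z v ∉ Kj := by
      intro hK
      obtain ⟨hd1, -⟩ := hesc v hvNN hK
      obtain ⟨nn, rfl⟩ := hc
      exact absurd hvc (not_lt.2 (le_trans (min_le_left _ _) (hd1 nn)))
    rw [hKj] at hnotK
    simp only [Set.mem_setOf_eq, not_and] at hnotK
    have hgB : dist (s.g z v) 0 ≤ B := hvB
    have hnotK2 : (∃ nn : ℕ, dist (s.g z v) ((nn:ℕ):ℂ) < 1/(j+1:ℝ)) ∨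
        dist (s.g z v) z < 1/(j+1:ℝ) := by
      by_cases hfa : ∀ nn : ℕ, 1/(j+1:ℝ) ≤ dist (s.g z v) ((nn:ℕ):ℂ)
      · right
        have := hnotK hgB
        by_contra hcon
        push_neg at hcon
        exact this hfa hcon
      · left
        push_neg at hfa
        exact hfa
    rcases hnotK2 with ⟨nn, hnn⟩ | hz2
    · refine ⟨v, ⟨hvNN, lt_of_lt_of_le hvc (min_le_right _ _)⟩, nn+1, ?_, ?_⟩
      · have h1 : ((nn:ℕ):ℝ) = dist ((nn:ℂ)) 0 := (natC_dist0 nn).symm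
        have h2 : dist ((nn:ℂ)) 0 ≤ dist ((nn:ℂ)) (s.g z v) + dist (s.g z v) 0 := dist_triangle _ _ _
        rw [dist_comm ((nn:ℂ)) (s.g z v)] at h2
        have h3 : 1/(j+1:ℝ) ≤ 1 := by
          rw [div_le_one (by positivity)]
          have : (0:ℝ) ≤ j := Nat.cast_nonneg j
          linarith
        have h4 : B ≤ (⌈B⌉₊:ℝ) := Nat.le_ceil B
        have : ((nn:ℕ):ℝ) < (⌈B⌉₊:ℝ) + 2 := by linarith
        have := (Nat.cast_lt (α := ℝ)).1 (by exact_mod_cast this)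
        omega
      · simp only [Nat.add_sub_cancel, if_neg (Nat.succ_ne_zero nn)]
        exact hnn
    · exact ⟨v, ⟨hvNN, lt_of_lt_of_le hvc (min_le_right _ _)⟩, 0, by omega, by simpa using hz2⟩
  choose v hv k hk1 hk2 using hwit
  have hpig := pigeon (P := fun j m =>
      (if m = 0 then dist (s.g z (v j)) z < 1/(j+1:ℝ)
       else dist (s.g z (v j)) ((m-1:ℕ):ℂ) < 1/(j+1:ℝ))) (⌈B⌉₊ + 2) ?_
  · obtain ⟨m, hmN, hm⟩ := hpig
    set b := if m = 0 then z else ((m-1:ℕ):ℂ) with hb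
    refine ⟨b, ?_, s.anchorG hz hc ?_⟩
    · rcases eq_or_ne m 0 with rfl | hm0
      · exact Or.inr (by simp [hb])
      · exact Or.inl ⟨m-1, by simp [hb, hm0]⟩
    · intro ρ hρ ε hε
      obtain ⟨J₁, hJ₁⟩ := exists_nat_one_div_lt (lt_min hρ hε : (0:ℝ) < min ρ ε)
      obtain ⟨j, hjJ, hjm⟩ := hm J₁
      have hj1 : 1/(j+1:ℝ) ≤ 1/(J₁+1:ℝ) := by
        apply one_div_le_one_div_of_le (by positivity)
        have : (J₁:ℝ) ≤ j := Nat.cast_le.2 hjJ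
        linarith
      have hsm : 1/(j+1:ℝ) < min ρ ε := lt_of_le_of_lt hj1 hJ₁
      obtain ⟨hvNN, hvc⟩ := hv j
      refine ⟨v j, hvNN, lt_of_lt_of_le (lt_trans hvc hsm) (min_le_left _ _), ?_⟩
      rcases eq_or_ne m 0 with rfl | hm0
      · simp only [if_pos rfl] at hjm
        rw [hb]
        simp only [if_pos rfl]
        exact lt_of_lt_of_le (lt_trans hjm hsm) (min_le_right _ _)
      · simp only [if_neg hm0] at hjm
        rw [hb]
        simp only [if_neg hm0]
        exact lt_of_lt_of_le (lt_trans hjm hsm) (min_le_right _ _)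
  · intro j
    exact ⟨k j, hk1 j, hk2 j⟩

/-- dichotomy for the g-end at infinity -/
lemma dichotGinf {z : ℂ} (hz : z ∈ Metric.closedBall (0:ℂ) s.r) :
    s.OutGinf z ∨ ∃ b, ((∃ n:ℕ, b = (n:ℂ)) ∨ b = z) ∧ s.LimGinf z b := by
  by_cases hout : s.OutGinf z
  · exact Or.inl hout
  right
  unfold OutGinf at hout
  push_neg at hout
  obtain ⟨B, hB⟩ := hout
  have hDz : z ∈ s.D := s.hrD hz
  have hwit : ∀ j : ℕ, ∃ v, (NN v ∧ (j:ℝ) < dist v 0) ∧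
      ∃ k : ℕ, k ≤ ⌈B⌉₊ + 2 ∧
        (if k = 0 then dist (s.g z v) z < 1/(j+1:ℝ)
         else dist (s.g z v) ((k-1:ℕ):ℂ) < 1/(j+1:ℝ)) := by
    intro j
    set Kj := {x : ℂ | dist x 0 ≤ B ∧ (∀ n:ℕ, 1/(j+1:ℝ) ≤ dist x (n:ℂ)) ∧ 1/(j+1:ℝ) ≤ dist x z}
      with hKj
    have hKjF : ∀ v ∈ Kj, NN v ∧ v ≠ z := by
      intro v hv
      constructor
      · intro nn hvn
        have := hv.2.1 nn
        rw [hvn, dist_self] at this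
        linarith [one_div_succ_pos j]
      · intro hvz
        have := hv.2.2
        rw [hvz, dist_self] at this
        linarith [one_div_succ_pos j]
    obtain ⟨δ, hδ0, R, hesc⟩ := s.escape_g hDz Kj (testK_compact B j z) hKjF
    obtain ⟨v, hvNN, hvR, hvB⟩ := hB (max R j)
    have hnotK : s.g z v ∉ Kj := by
      intro hK
      obtain ⟨-, hd2⟩ := hesc v hvNN hK
      exact absurd hvR (not_lt.2 (le_trans hd2 (le_max_left _ _)))
    rw [hKj] at hnotK
    simp only [Set.mem_setOf_eq, not_and] at hnotK
    have hgB : dist (s.g z v) 0 ≤ B := hvB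
    have hnotK2 : (∃ nn : ℕ, dist (s.g z v) ((nn:ℕ):ℂ) < 1/(j+1:ℝ)) ∨
        dist (s.g z v) z < 1/(j+1:ℝ) := by
      by_cases hfa : ∀ nn : ℕ, 1/(j+1:ℝ) ≤ dist (s.g z v) ((nn:ℕ):ℂ)
      · right
        have := hnotK hgB
        by_contra hcon
        push_neg at hcon
        exact this hfa hcon
      · left
        push_neg at hfa
        exact hfa
    have hvj : (j:ℝ) < dist v 0 := lt_of_le_of_lt (le_max_right R j) hvR
    rcases hnotK2 with ⟨nn, hnn⟩ | hz2
    · refine ⟨v, ⟨hvNN, hvj⟩, nn+1, ?_, ?_⟩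
      · have h1 : ((nn:ℕ):ℝ) = dist ((nn:ℂ)) 0 := (natC_dist0 nn).symm
        have h2 : dist ((nn:ℂ)) 0 ≤ dist ((nn:ℂ)) (s.g z v) + dist (s.g z v) 0 := dist_triangle _ _ _
        rw [dist_comm ((nn:ℂ)) (s.g z v)] at h2
        have h3 : 1/(j+1:ℝ) ≤ 1 := by
          rw [div_le_one (by positivity)]
          have : (0:ℝ) ≤ j := Nat.cast_nonneg j
          linarith
        have h4 : B ≤ (⌈B⌉₊:ℝ) := Nat.le_ceil B
        have : ((nn:ℕ):ℝ) < (⌈B⌉₊:ℝ) + 2 := by linarith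
        have := (Nat.cast_lt (α := ℝ)).1 (by exact_mod_cast this)
        omega
      · simp only [Nat.add_sub_cancel, if_neg (Nat.succ_ne_zero nn)]
        exact hnn
    · exact ⟨v, ⟨hvNN, hvj⟩, 0, by omega, by simpa using hz2⟩
  choose v hv k hk1 hk2 using hwit
  have hpig := pigeon (P := fun j m =>
      ((j:ℝ) < dist (v j) 0) ∧
      (if m = 0 then dist (s.g z (v j)) z < 1/(j+1:ℝ)
       else dist (s.g z (v j)) ((m-1:ℕ):ℂ) < 1/(j+1:ℝ))) (⌈B⌉₊ + 2) ?_
  · obtain ⟨m, hmN, hm⟩ := hpig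
    set b := if m = 0 then z else ((m-1:ℕ):ℂ) with hb
    refine ⟨b, ?_, s.anchorGinf hz ?_⟩
    · rcases eq_or_ne m 0 with rfl | hm0
      · exact Or.inr (by simp [hb])
      · exact Or.inl ⟨m-1, by simp [hb, hm0]⟩
    · intro R ε hε
      obtain ⟨J₁, hJ₁⟩ := exists_nat_one_div_lt hε
      obtain ⟨J₂, hJ₂⟩ := exists_nat_gt R
      obtain ⟨j, hjJ, hjR, hjm⟩ := hm (max J₁ J₂)
      have hj1 : 1/(j+1:ℝ) ≤ 1/(J₁+1:ℝ) := by
        apply one_div_le_one_div_of_le (by positivity)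
        have h0 : J₁ ≤ j := le_trans (le_max_left _ _) hjJ
        have : (J₁:ℝ) ≤ j := Nat.cast_le.2 h0
        linarith
      have hsm : 1/(j+1:ℝ) < ε := lt_of_le_of_lt hj1 hJ₁
      obtain ⟨hvNN, -⟩ := hv j
      refine ⟨v j, hvNN, ?_, ?_⟩
      · have h0 : J₂ ≤ j := le_trans (le_max_right _ _) hjJ
        have : (J₂:ℝ) ≤ j := Nat.cast_le.2 h0
        linarith
      · rcases eq_or_ne m 0 with rfl | hm0
        · simp only [if_pos rfl] at hjm
          rw [hb]; simp only [if_pos rfl]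
          exact lt_trans hjm hsm
        · simp only [if_neg hm0] at hjm
          rw [hb]; simp only [if_neg hm0]
          exact lt_trans hjm hsm
  · intro j
    exact ⟨k j, hk1 j, (hv j).2, hk2 j⟩

/-- uniqueness of g-limits at a natural point -/
lemma limG_unique {z c b b' : ℂ} (h1 : s.LimG z c b) (h2 : s.LimG z c b') : b = b' := by
  by_contra hne
  have hd : 0 < dist b b' := dist_pos.2 hne
  obtain ⟨ρ1, hρ1, hb1⟩ := h1 (dist b b' / 2) (by linarith)
  obtain ⟨ρ2, hρ2, hb2⟩ := h2 (dist b b' / 2) (by linarith)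
  obtain ⟨w, hwNN, -, hwc⟩ := exists_ptF z c (min ρ1 ρ2) (lt_min hρ1 hρ2)
  have e1 := hb1 w hwNN (lt_of_lt_of_le hwc (min_le_left _ _))
  have e2 := hb2 w hwNN (lt_of_lt_of_le hwc (min_le_right _ _))
  have := dist_triangle b (s.g z w) b'
  rw [dist_comm b (s.g z w)] at this
  linarith

/-- uniqueness of g-limits at infinity -/
lemma limGinf_unique {z b b' : ℂ} (h1 : s.LimGinf z b) (h2 : s.LimGinf z b') : b = b' := by
  by_contra hne
  have hd : 0 < dist b b' := dist_pos.2 hne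
  obtain ⟨R1, hb1⟩ := h1 (dist b b' / 2) (by linarith)
  obtain ⟨R2, hb2⟩ := h2 (dist b b' / 2) (by linarith)
  set mR := max (max R1 R2) 0 + 1 with hmR
  have h00 : (0:ℝ) ≤ max (max R1 R2) 0 := le_max_right _ _
  have hmR0 : (0:ℝ) < mR := by rw [hmR]; linarith
  set v : ℂ := ((-mR : ℝ) : ℂ) with hv
  have hvNN : NN v := by
    intro n hn
    have hre := congrArg Complex.re hn
    simp only [hv, Complex.ofReal_re, Complex.natCast_re] at hre
    have h0 : (0:ℝ) ≤ n := Nat.cast_nonneg n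
    rw [← hre] at h0
    linarith
  have hvd : dist v 0 = mR := by
    rw [hv, Complex.dist_eq, sub_zero, Complex.norm_real, Real.norm_eq_abs, abs_neg, abs_of_pos hmR0]
  have hR1 : R1 < dist v 0 := by
    rw [hvd, hmR]
    have : R1 ≤ max (max R1 R2) 0 := le_trans (le_max_left _ _) (le_max_left _ _)
    linarith
  have hR2 : R2 < dist v 0 := by
    rw [hvd, hmR]
    have : R2 ≤ max (max R1 R2) 0 := le_trans (le_max_right _ _) (le_max_left _ _)
    linarith
  have e1 := hb1 v hvNN hR1
  have e2 := hb2 v hvNN hR2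
  have := dist_triangle b (s.g z v) b'
  rw [dist_comm b (s.g z v)] at this
  linarith

/-- an h-limit at a puncture forces the reverse g-limit -/
lemma trick_hg {z a c : ℂ} (hz : z ∈ Metric.closedBall (0:ℂ) s.r)
    (hc : ∃ n:ℕ, c = (n:ℂ)) (hL : s.LimH z a c) : s.LimG z c a := by
  have hDz : z ∈ s.D := s.hrD hz
  apply s.anchorG hz hc
  intro ρ hρ ε hε
  obtain ⟨ρ₁, hρ₁0, hρ₁⟩ := hL ρ hρ
  obtain ⟨w, hwNN, hwz, hwa⟩ := exists_ptF z a (min ε ρ₁) (lt_min hε hρ₁0)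
  refine ⟨s.h z w, s.hmem z hDz w hwNN hwz, ?_, ?_⟩
  · exact hρ₁ w hwNN hwz (lt_of_lt_of_le hwa (min_le_right _ _))
  · rw [s.hgh z hDz w hwNN hwz]
    exact lt_of_lt_of_le hwa (min_le_left _ _)

end PSetup

lemma const_real' {t : ℝ} (ht : 0 ≤ t) {f : ℝ → ℂ} (hf : ContinuousOn f (Set.Icc 0 t))
    {c : ℂ} {ε : ℝ} (havoid : ∀ x ∈ Set.Icc (0:ℝ) t, dist (f x) c ≠ ε)
    (hT : dist (f t) c < ε) : dist (f 0) c < ε := by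
  have hmap : ∀ x ∈ Set.Icc (0:ℝ) t, t - x ∈ Set.Icc (0:ℝ) t := by
    intro x hx
    obtain ⟨h1, h2⟩ := Set.mem_Icc.1 hx
    exact Set.mem_Icc.2 ⟨by linarith, by linarith⟩
  have h := const_real ht (f := fun x => f (t - x))
    (hf.comp (Continuous.continuousOn (by continuity)) hmap)
    (c := c) (ε := ε)
    (fun x hx => havoid _ (hmap x hx))
    (by simpa using hT)
  simpa using h

lemma real_mem_L (s : PSetup) {x : ℝ} (h0 : 0 ≤ x) (hr : x ≤ s.r) :
    ((x:ℝ):ℂ) ∈ Metric.closedBall (0:ℂ) s.r := by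
  rw [Metric.mem_closedBall, Complex.dist_eq, sub_zero, Complex.norm_real, Real.norm_eq_abs, abs_of_nonneg h0]
  exact hr

lemma real_NN {x : ℝ} (h0 : 0 < x) (h1 : x < 1) : NN ((x:ℝ):ℂ) := by
  intro n hn
  have := congrArg Complex.re hn
  simp only [Complex.ofReal_re, Complex.natCast_re] at this
  rcases Nat.eq_zero_or_pos n with rfl | hp
  · rw [Nat.cast_zero] at this; linarith
  · have h2 : (1:ℝ) ≤ n := by exact_mod_cast hp
    linarith

lemma neg_real_NN {x : ℝ} (h0 : 0 < x) : NN ((-x:ℝ):ℂ) := by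
  intro n hn
  have := congrArg Complex.re hn
  simp only [Complex.ofReal_re, Complex.natCast_re] at this
  have h1 : (0:ℝ) ≤ n := Nat.cast_nonneg n
  linarith [this ▸ (neg_neg_iff_pos.2 h0 : -x < 0)]

lemma frac_NN {m : ℕ} {u : ℝ} (h0 : 0 < u) (h1 : u < 1) : NN (((m:ℝ) - u : ℝ):ℂ) := by
  intro n hn
  have := congrArg Complex.re hn
  simp only [Complex.ofReal_re, Complex.natCast_re] at this
  have h2 : ((m:ℝ)) - u < m := by linarith
  have h3 : ((m:ℝ)) - 1 < (m:ℝ) - u := by linarith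
  rw [this] at h2 h3
  have hnm : n < m := by exact_mod_cast h2
  have : ((m:ℝ)) - 1 < n := h3
  have hm1 : (m:ℝ) < (n:ℝ) + 1 := by linarith
  have hmn : m < n + 1 := by exact_mod_cast hm1
  omega

lemma sphere_nat_NN {m : ℕ} {ε : ℝ} (h0 : 0 < ε) (h1 : ε < 1) {x : ℂ}
    (hx : dist x ((m:ℂ)) = ε) : NN x := by
  rintro n rfl
  rcases eq_or_ne n m with rfl | hne
  · rw [dist_self] at hx; linarith
  · have := natC_dist hne
    rw [hx] at this; linarith

namespace PSetup
variable (s : PSetup)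

/-- chain: two ends cannot both go out -/
lemma chainOutOut {z a : ℂ} (hzD : z ∈ s.D) (h1 : s.OutH z a) (h2 : s.OutGinf z) : False := by
  obtain ⟨R₀, hR₀⟩ := h2 (dist a 0 + 1)
  obtain ⟨ρ₀, hρ₀0, hρ₀⟩ := h1 R₀
  obtain ⟨w, hwNN, hwz, hwa⟩ := exists_ptF z a (min ρ₀ 1) (lt_min hρ₀0 one_pos)
  have hv := hρ₀ w hwNN hwz (lt_of_lt_of_le hwa (min_le_left _ _))
  have hvNN : NN (s.h z w) := s.hmem z hzD w hwNN hwz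
  have := hR₀ (s.h z w) hvNN hv
  rw [s.hgh z hzD w hwNN hwz] at this
  have h4 : dist w 0 ≤ dist w a + dist a 0 := dist_triangle _ _ _
  have h5 : dist w a < 1 := lt_of_lt_of_le hwa (min_le_right _ _)
  linarith

/-- chain: an out-end determines the g-limit at infinity -/
lemma chainOutLim {z a b : ℂ} (hzD : z ∈ s.D) (h1 : s.OutH z a) (h2 : s.LimGinf z b) :
    b = a := by
  by_contra hne
  have hd : 0 < dist b a := dist_pos.2 hne
  obtain ⟨R, hR⟩ := h2 (dist b a / 2) (by linarith)
  obtain ⟨ρ, hρ0, hρ⟩ := h1 R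
  obtain ⟨w, hwNN, hwz, hwa⟩ := exists_ptF z a (min ρ (dist b a / 2))
    (lt_min hρ0 (by linarith))
  have hv := hρ w hwNN hwz (lt_of_lt_of_le hwa (min_le_left _ _))
  have hvNN : NN (s.h z w) := s.hmem z hzD w hwNN hwz
  have hgb := hR (s.h z w) hvNN hv
  rw [s.hgh z hzD w hwNN hwz] at hgb
  have h4 : dist b a ≤ dist b w + dist w a := dist_triangle _ _ _
  have h5 : dist w a < dist b a / 2 := lt_of_lt_of_le hwa (min_le_right _ _)
  rw [dist_comm b w] at h4
  linarith

/-- Case A : the end of the fibre over 0 at the puncture 0 has a finite limit. -/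
lemma caseA {c : ℂ} (hc : ∃ n:ℕ, c = (n:ℂ)) (hLim : s.LimH 0 0 c) : False := by
  have h0L : (0:ℂ) ∈ Metric.closedBall (0:ℂ) s.r := Metric.mem_closedBall_self s.hr.le
  have h0D : (0:ℂ) ∈ s.D := s.hrD h0L
  -- separator sphere(c, 1/3)
  have hsp : ∀ v ∈ Metric.sphere c (1/3:ℝ), NN v := by
    intro v hv
    obtain ⟨m, rfl⟩ := hc
    exact sphere_nat_NN (by norm_num) (by norm_num) (Metric.mem_sphere.1 hv)
  obtain ⟨δ₁, hδ₁0, R₁, hesc₁⟩ := s.escape_h _ (isCompact_sphere c (1/3:ℝ)) hsp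
  set ρ : ℝ := min δ₁ (1/3) with hρdef
  have hρ0 : 0 < ρ := lt_min hδ₁0 (by norm_num)
  have hρδ : ρ ≤ δ₁ := min_le_left _ _
  have hρ3 : ρ ≤ 1/3 := min_le_right _ _
  set t : ℝ := min ρ s.r / 2 with htdef
  have ht0 : 0 < t := by
    have := lt_min hρ0 s.hr
    rw [htdef]; linarith [lt_min hρ0 s.hr]
  have htρ : t < ρ := by
    rw [htdef]
    have h1 : min ρ s.r ≤ ρ := min_le_left _ _
    linarith
  have htr : t ≤ s.r := by
    rw [htdef]
    have h1 : min ρ s.r ≤ s.r := min_le_right _ _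
    linarith [s.hr]
  set T : ℂ := ((t:ℝ):ℂ) with hTdef
  have hTL : T ∈ Metric.closedBall (0:ℂ) s.r := real_mem_L s ht0.le htr
  have hTD : T ∈ s.D := s.hrD hTL
  have hT1 : t < 1 := by
    have := s.hr8; linarith
  have hTNN : NN T := real_NN ht0 hT1
  have hT0 : T ≠ 0 := by
    rw [hTdef]
    intro hh
    have := congrArg Complex.re hh
    simp at this
    linarith
  have hTd0 : dist T 0 = t := by
    rw [hTdef, Complex.dist_eq, sub_zero, Complex.norm_real, Real.norm_eq_abs, abs_of_pos ht0]
  -- generic escape fact : points within ρ of 0 avoid the separator sphere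
  have havoidgen : ∀ z ∈ Metric.closedBall (0:ℂ) s.r, ∀ w, NN w → w ≠ z →
      dist w 0 < ρ → dist (s.h z w) c ≠ 1/3 := by
    intro z hz w hwNN hwz hw0 heq
    obtain ⟨hd1, -, -⟩ := hesc₁ z hz w hwNN hwz (Metric.mem_sphere.2 heq)
    have := hd1 0
    simp only [Nat.cast_zero] at this
    linarith
  -- the image over z = 0 is in the ball
  have hball0 : ∀ w, NN w → w ≠ 0 → dist w 0 < ρ → dist (s.h 0 w) c < 1/3 := by
    set S₀ := Metric.ball (0:ℂ) ρ \ (NCset ∪ {0}) with hS₀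
    have hconn : IsPreconnected S₀ :=
      (pathconn_ball_diff 0 ρ hρ0 _ (NCset_countable.union (Set.countable_singleton 0))).isConnected.isPreconnected
    have hSsub : S₀ ⊆ {w | NN w ∧ w ≠ (0:ℂ)} := by
      rintro w ⟨hw1, hw2⟩
      exact ⟨notin_NN w (fun h => hw2 (Or.inl h)), fun h => hw2 (Or.inr h)⟩
    have himg : IsPreconnected (s.h 0 '' S₀) :=
      hconn.image _ ((s.contHw 0 h0D).mono hSsub)
    obtain ⟨ρ₂, hρ₂0, hρ₂⟩ := hLim (1/3) (by norm_num)
    obtain ⟨w₂, hw₂NN, hw₂0, hw₂d⟩ := exists_ptF 0 0 (min ρ ρ₂) (lt_min hρ0 hρ₂0)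
    have hw₂S : w₂ ∈ S₀ := ⟨Metric.mem_ball.2 (lt_of_lt_of_le hw₂d (min_le_left _ _)), by
      rintro (hin | hin)
      · exact (NN_notin _ hw₂NN) hin
      · exact hw₂0 hin⟩
    have hanchor : dist (s.h 0 w₂) c < 1/3 :=
      hρ₂ w₂ hw₂NN hw₂0 (lt_of_lt_of_le hw₂d (min_le_right _ _))
    have hall := subset_ball_of_avoid himg
      (by
        rintro x ⟨w, hwS, rfl⟩
        have hw := hSsub hwS
        exact havoidgen 0 h0L w hw.1 hw.2 (Metric.mem_ball.1 hwS.1))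
      ⟨s.h 0 w₂, ⟨w₂, hw₂S, rfl⟩, hanchor⟩
    intro w hwNN hw0 hwρ
    exact hall _ ⟨w, ⟨Metric.mem_ball.2 hwρ, by
      rintro (hin | hin)
      · exact (NN_notin _ hwNN) hin
      · exact hw0 hin⟩, rfl⟩
  -- constancy along [0, t]
  set w₀ : ℂ := ((-(ρ/2) : ℝ):ℂ) with hw₀def
  have hw₀NN : NN w₀ := neg_real_NN (by linarith)
  have hw₀d : dist w₀ 0 = ρ/2 := by
    rw [hw₀def, Complex.dist_eq, sub_zero, Complex.norm_real, Real.norm_eq_abs, abs_of_neg (by linarith : -(ρ/2) < 0)]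
    ring
  have hw₀ne : ∀ x : ℝ, 0 ≤ x → w₀ ≠ ((x:ℝ):ℂ) := by
    intro x hx hh
    have := congrArg Complex.re hh
    simp only [hw₀def, Complex.ofReal_re] at this
    linarith
  have hcont : ContinuousOn (fun x : ℝ => s.h ((x:ℝ):ℂ) w₀) (Set.Icc 0 t) := by
    apply (s.contH w₀ hw₀NN).comp Complex.continuous_ofReal.continuousOn
    intro x hx
    obtain ⟨h1, h2⟩ := Set.mem_Icc.1 hx
    exact ⟨s.hrD (real_mem_L s h1 (le_trans h2 htr)), hw₀ne x h1⟩
  have hend : dist (s.h T w₀) c < 1/3 := by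
    apply const_real ht0.le hcont
    · intro x hx
      obtain ⟨h1, h2⟩ := Set.mem_Icc.1 hx
      exact havoidgen _ (real_mem_L s h1 (le_trans h2 htr)) w₀ hw₀NN (hw₀ne x h1)
        (by rw [hw₀d]; linarith)
    · have h00 : ((0:ℝ):ℂ) = (0:ℂ) := by norm_num
      rw [h00]
      exact hball0 w₀ hw₀NN (hw₀ne 0 (le_refl _)) (by rw [hw₀d]; linarith)
  -- all of the punctured ball over T maps into the ball
  have hballT : ∀ w, NN w → w ≠ T → dist w 0 < ρ → dist (s.h T w) c < 1/3 := by
    set ST := Metric.ball (0:ℂ) ρ \ (NCset ∪ {T}) with hST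
    have hconn : IsPreconnected ST :=
      (pathconn_ball_diff 0 ρ hρ0 _ (NCset_countable.union (Set.countable_singleton T))).isConnected.isPreconnected
    have hSsub : ST ⊆ {w | NN w ∧ w ≠ T} := by
      rintro w ⟨hw1, hw2⟩
      exact ⟨notin_NN w (fun h => hw2 (Or.inl h)), fun h => hw2 (Or.inr h)⟩
    have himg : IsPreconnected (s.h T '' ST) :=
      hconn.image _ ((s.contHw T hTD).mono hSsub)
    have hw₀S : w₀ ∈ ST := ⟨Metric.mem_ball.2 (by rw [hw₀d]; linarith), by
      rintro (hin | hin)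
      · exact (NN_notin _ hw₀NN) hin
      · exact hw₀ne t ht0.le hin⟩
    have hall := subset_ball_of_avoid himg
      (by
        rintro x ⟨w, hwS, rfl⟩
        have hw := hSsub hwS
        exact havoidgen T hTL w hw.1 hw.2 (Metric.mem_ball.1 hwS.1))
      ⟨s.h T w₀, ⟨w₀, hw₀S, rfl⟩, hend⟩
    intro w hwNN hwT hwρ
    exact hall _ ⟨w, ⟨Metric.mem_ball.2 hwρ, by
      rintro (hin | hin)
      · exact (NN_notin _ hwNN) hin
      · exact hwT hin⟩, rfl⟩
  -- bootstrap to full limits at both punctures over T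
  have hboot : ∀ ε > 0, ∃ δ₄ > 0, ∀ w, NN w → w ≠ T →
      ((∀ n:ℕ, dist w (n:ℂ) < δ₄) → False) ∨ True := fun ε hε => ⟨1, one_pos, fun w _ _ => Or.inr trivial⟩
  have hLimT : ∀ a : ℂ, ((∃ n:ℕ, a = (n:ℂ)) ∨ a = T) → dist a 0 ≤ t → s.LimH T a c := by
    intro a ha had
    intro ε hε
    set K₄ := {x : ℂ | dist x c ≤ 1/3 ∧ ε ≤ dist x c} with hK₄
    have hK₄c : IsCompact K₄ := by
      apply IsCompact.of_isClosed_subset (isCompact_closedBall c (1/3))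
      · exact IsClosed.inter (isClosed_le (continuous_id.dist continuous_const) continuous_const)
          (isClosed_le continuous_const (continuous_id.dist continuous_const))
      · intro x hx
        exact Metric.mem_closedBall.2 hx.1
    have hK₄NN : ∀ v ∈ K₄, NN v := by
      intro v hv
      simp only [hK₄, Set.mem_setOf_eq] at hv
      obtain ⟨hv1, hv2⟩ := hv
      rintro n rfl
      obtain ⟨m, rfl⟩ := hc
      rcases eq_or_ne n m with rfl | hne
      · rw [dist_self] at hv2
        linarith
      · have := natC_dist hne
        linarith
    obtain ⟨δ₄, hδ₄0, R₄, hesc₄⟩ := s.escape_h K₄ hK₄c hK₄NN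
    refine ⟨min δ₄ (min (ρ - t) ρ), lt_min hδ₄0 (lt_min (by linarith) hρ0), fun w hwNN hwT hwa => ?_⟩
    have hw0ρ : dist w 0 < ρ := by
      have h1 : dist w 0 ≤ dist w a + dist a 0 := dist_triangle _ _ _
      have h2 : dist w a < ρ - t := lt_of_lt_of_le hwa (le_trans (min_le_right _ _) (min_le_left _ _))
      linarith
    have hsmall := hballT w hwNN hwT hw0ρ
    by_contra hcon
    push_neg at hcon
    have hK : s.h T w ∈ K₄ := ⟨hsmall.le, hcon⟩
    obtain ⟨hd1, hd2, -⟩ := hesc₄ T hTL w hwNN hwT hK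
    rcases ha with ⟨n, rfl⟩ | rfl
    · exact absurd hwa (not_lt.2 (le_trans (min_le_left _ _) (hd1 n)))
    · exact absurd hwa (not_lt.2 (le_trans (min_le_left _ _) hd2))
  have hL0 : s.LimH T 0 c := hLimT 0 (Or.inl ⟨0, by norm_num⟩) (by simp [ht0.le])
  have hLT : s.LimH T T c := hLimT T (Or.inr rfl) (le_of_eq hTd0)
  have hg0 : s.LimG T c 0 := s.trick_hg hTL hc hL0
  have hgT : s.LimG T c T := s.trick_hg hTL hc hLT
  have := s.limG_unique hg0 hgT
  exact hT0 this.symm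

end PSetup

namespace PSetup
variable (s : PSetup)

lemma caseB2 (hOut : s.OutH 0 0) {t : ℝ} (ht0 : 0 < t) (htr : t ≤ s.r) {astar c₁ : ℂ}
    (hastar : astar = 0 ∨ astar = ((t:ℝ):ℂ)) (hc₁ : ∃ n:ℕ, c₁ = (n:ℂ))
    (hLa : s.LimH ((t:ℝ):ℂ) astar c₁) : False := by
  have h0L : (0:ℂ) ∈ Metric.closedBall (0:ℂ) s.r := Metric.mem_closedBall_self s.hr.le
  have h0D : (0:ℂ) ∈ s.D := s.hrD h0L
  set T : ℂ := ((t:ℝ):ℂ) with hTdef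
  have hTL : T ∈ Metric.closedBall (0:ℂ) s.r := real_mem_L s ht0.le htr
  have hTD : T ∈ s.D := s.hrD hTL
  have hTd0 : dist T 0 = t := by
    rw [hTdef, Complex.dist_eq, sub_zero, Complex.norm_real, Real.norm_eq_abs, abs_of_pos ht0]
  have htsmall : t ≤ 1/8 := le_trans htr s.hr8
  have hdast : dist astar 0 ≤ t := by
    rcases hastar with rfl | rfl
    · simpa using ht0.le
    · exact le_of_eq hTd0
  have htrick : s.LimG T c₁ astar := s.trick_hg hTL hc₁ hLa
  -- separator sphere(0, 1/2)
  have hK₇cond : ∀ v ∈ Metric.sphere (0:ℂ) (1/2:ℝ), NN v ∧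
      ∀ z ∈ Metric.closedBall (0:ℂ) s.r, v ≠ z := by
    intro v hv
    have hd := Metric.mem_sphere.1 hv
    constructor
    · rintro n rfl
      rw [natC_dist0] at hd
      rcases Nat.eq_zero_or_pos n with rfl | hp
      · norm_num at hd
      · have : (1:ℝ) ≤ n := by exact_mod_cast hp
        linarith
    · intro z hz hvz
      have hz8 : dist z 0 ≤ s.r := Metric.mem_closedBall.1 hz
      rw [hvz] at hd
      have := s.hr8
      linarith
  obtain ⟨δ₇, hδ₇0, R₇, hesc₇⟩ := s.escape_gU _ (isCompact_sphere (0:ℂ) (1/2:ℝ)) hK₇cond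
  set ρ2 : ℝ := min δ₇ (1/2) with hρ2def
  have hρ20 : 0 < ρ2 := lt_min hδ₇0 (by norm_num)
  have hρ2δ : ρ2 ≤ δ₇ := min_le_left _ _
  have hρ2h : ρ2 ≤ 1/2 := min_le_right _ _
  obtain ⟨m₁, hm₁⟩ := hc₁
  have havoidG : ∀ z ∈ Metric.closedBall (0:ℂ) s.r, ∀ v, NN v → dist v c₁ < ρ2 →
      dist (s.g z v) 0 ≠ 1/2 := by
    intro z hz v hvNN hvc heq
    obtain ⟨hd1, -⟩ := hesc₇ z hz v hvNN (Metric.mem_sphere.2 heq)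
    have := hd1 m₁
    rw [← hm₁] at this
    linarith
  -- indicator point
  set v₀ : ℂ := (((m₁:ℝ) - ρ2/2 : ℝ):ℂ) with hv₀def
  have hv₀NN : NN v₀ := frac_NN (by linarith) (by linarith)
  have hv₀d : dist v₀ c₁ = ρ2/2 := by
    rw [hv₀def, hm₁, Complex.dist_eq]
    have : (((m₁:ℝ) - ρ2/2 : ℝ):ℂ) - ((m₁:ℕ):ℂ) = ((-(ρ2/2) : ℝ):ℂ) := by
      push_cast; ring
    rw [this, Complex.norm_real, Real.norm_eq_abs, abs_of_neg (by linarith : -(ρ2/2) < 0)]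
    ring
  have hv₀S : dist v₀ c₁ < ρ2 := by rw [hv₀d]; linarith
  -- continuity of the indicator path
  have hcont : ContinuousOn (fun x : ℝ => s.g ((x:ℝ):ℂ) v₀) (Set.Icc 0 t) := by
    apply (s.contG v₀ hv₀NN).comp Complex.continuous_ofReal.continuousOn
    intro x hx
    obtain ⟨h1, h2⟩ := Set.mem_Icc.1 hx
    exact s.hrD (real_mem_L s h1 (le_trans h2 htr))
  -- at z = T the image ball is inside ball(0,1/2)
  have hsmallT : ∀ v, NN v → dist v c₁ < ρ2 → dist (s.g T v) 0 < 1/2 := by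
    set S₇ := Metric.ball c₁ ρ2 \ NCset with hS₇
    have hconn : IsPreconnected S₇ :=
      (pathconn_ball_diff c₁ ρ2 hρ20 _ NCset_countable).isConnected.isPreconnected
    have hSsub : S₇ ⊆ {v | NN v} := fun v hv => notin_NN v hv.2
    have himg : IsPreconnected (s.g T '' S₇) :=
      hconn.image _ ((s.contGw T hTD).mono hSsub)
    obtain ⟨ρ₈, hρ₈0, hρ₈⟩ := htrick (1/2 - t) (by linarith)
    obtain ⟨v₁, hv₁NN, -, hv₁c⟩ := exists_ptF T c₁ (min ρ2 ρ₈) (lt_min hρ20 hρ₈0)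
    have hanch : dist (s.g T v₁) 0 < 1/2 := by
      have h1 := hρ₈ v₁ hv₁NN (lt_of_lt_of_le hv₁c (min_le_right _ _))
      have h2 : dist (s.g T v₁) 0 ≤ dist (s.g T v₁) astar + dist astar 0 := dist_triangle _ _ _
      linarith
    have hall := subset_ball_of_avoid himg
      (by
        rintro x ⟨v, hvS, rfl⟩
        exact havoidG T hTL v (notin_NN v hvS.2) (Metric.mem_ball.1 hvS.1))
      ⟨s.g T v₁, ⟨v₁, ⟨Metric.mem_ball.2 (lt_of_lt_of_le hv₁c (min_le_left _ _)),
        NN_notin _ hv₁NN⟩, rfl⟩, hanch⟩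
    intro v hvNN hvc
    exact hall _ ⟨v, ⟨Metric.mem_ball.2 hvc, NN_notin _ hvNN⟩, rfl⟩
  -- constancy down to z = 0
  have hψt : dist (s.g T v₀) 0 < 1/2 := hsmallT v₀ hv₀NN hv₀S
  have hψ0 : dist (s.g 0 v₀) 0 < 1/2 := by
    have h := const_real' ht0.le hcont
      (c := 0) (ε := 1/2)
      (fun x hx => by
        obtain ⟨h1, h2⟩ := Set.mem_Icc.1 hx
        exact havoidG _ (real_mem_L s h1 (le_trans h2 htr)) v₀ hv₀NN hv₀S)
      (by rw [← hTdef] at *; exact hψt)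
    simpa using h
  -- all of the punctured ball over 0 maps into ball(0,1/2)
  have hsmall0 : ∀ v, NN v → dist v c₁ < ρ2 → dist (s.g 0 v) 0 < 1/2 := by
    set S₇ := Metric.ball c₁ ρ2 \ NCset with hS₇
    have hconn : IsPreconnected S₇ :=
      (pathconn_ball_diff c₁ ρ2 hρ20 _ NCset_countable).isConnected.isPreconnected
    have hSsub : S₇ ⊆ {v | NN v} := fun v hv => notin_NN v hv.2
    have himg : IsPreconnected (s.g 0 '' S₇) :=
      hconn.image _ ((s.contGw 0 h0D).mono hSsub)
    have hall := subset_ball_of_avoid himg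
      (by
        rintro x ⟨v, hvS, rfl⟩
        exact havoidG 0 h0L v (notin_NN v hvS.2) (Metric.mem_ball.1 hvS.1))
      ⟨s.g 0 v₀, ⟨v₀, ⟨Metric.mem_ball.2 hv₀S, NN_notin _ hv₀NN⟩, rfl⟩, hψ0⟩
    intro v hvNN hvc
    exact hall _ ⟨v, ⟨Metric.mem_ball.2 hvc, NN_notin _ hvNN⟩, rfl⟩
  -- dichotomy for the g-end at c₁ over 0
  rcases s.dichotG h0L ⟨m₁, hm₁⟩ with hOutG | ⟨b₀, hb₀, hLimG0⟩
  · obtain ⟨ρ₉, hρ₉0, hρ₉⟩ := hOutG (1/2)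
    obtain ⟨v, hvNN, -, hvc⟩ := exists_ptF 0 c₁ (min ρ₉ ρ2) (lt_min hρ₉0 hρ20)
    have h1 := hρ₉ v hvNN (lt_of_lt_of_le hvc (min_le_left _ _))
    have h2 := hsmall0 v hvNN (lt_of_lt_of_le hvc (min_le_right _ _))
    linarith
  · -- b₀ must be 0
    have hb₀0 : b₀ = 0 := by
      obtain ⟨ρ₁₀, hρ₁₀0, hρ₁₀⟩ := hLimG0 (1/4) (by norm_num)
      obtain ⟨v, hvNN, -, hvc⟩ := exists_ptF 0 c₁ (min ρ₁₀ ρ2) (lt_min hρ₁₀0 hρ20)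
      have h1 := hρ₁₀ v hvNN (lt_of_lt_of_le hvc (min_le_left _ _))
      have h2 := hsmall0 v hvNN (lt_of_lt_of_le hvc (min_le_right _ _))
      have h3 : dist b₀ 0 < 3/4 := by
        have := dist_triangle b₀ (s.g 0 v) 0
        rw [dist_comm b₀ (s.g 0 v)] at this
        linarith
      rcases hb₀ with ⟨n, rfl⟩ | h
      · rw [natC_dist0] at h3
        rcases Nat.eq_zero_or_pos n with rfl | hp
        · norm_num
        · have : (1:ℝ) ≤ n := by exact_mod_cast hp
          linarith
      · exact h
    rw [hb₀0] at hLimG0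
    -- final chain contradicting OutH 0 0
    obtain ⟨ρB, hρB0, hρB⟩ := hOut (dist c₁ 0 + 1)
    obtain ⟨ρC, hρC0, hρC⟩ := hLimG0 ρB hρB0
    obtain ⟨v, hvNN, -, hvc⟩ := exists_ptF 0 c₁ (min ρC 1) (lt_min hρC0 one_pos)
    obtain ⟨hwNN, hwz⟩ := s.gmem 0 h0D v hvNN
    have h1 : dist (s.g 0 v) 0 < ρB := hρC v hvNN (lt_of_lt_of_le hvc (min_le_left _ _))
    have h2 := hρB (s.g 0 v) hwNN hwz h1
    rw [s.hhg 0 h0D v hvNN] at h2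
    have h3 : dist v 0 ≤ dist v c₁ + dist c₁ 0 := dist_triangle _ _ _
    have h4 : dist v c₁ < 1 := lt_of_lt_of_le hvc (min_le_right _ _)
    linarith

lemma caseB (hOut : s.OutH 0 0) : False := by
  have h0L : (0:ℂ) ∈ Metric.closedBall (0:ℂ) s.r := Metric.mem_closedBall_self s.hr.le
  set t : ℝ := s.r/2 with htdef
  have ht0 : 0 < t := by rw [htdef]; linarith [s.hr]
  have htr : t ≤ s.r := by rw [htdef]; linarith [s.hr]
  set T : ℂ := ((t:ℝ):ℂ) with hTdef
  have hTL : T ∈ Metric.closedBall (0:ℂ) s.r := real_mem_L s ht0.le htr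
  have hTD : T ∈ s.D := s.hrD hTL
  have hT0 : T ≠ 0 := by
    rw [hTdef]
    intro hh
    have := congrArg Complex.re hh
    simp at this
    linarith
  rcases s.dichotH hTL (Or.inl ⟨0, by norm_num⟩ :
      (∃ n:ℕ, (0:ℂ) = (n:ℂ)) ∨ (0:ℂ) = T) with hO0 | ⟨c₀, hc₀, hL0⟩
  · rcases s.dichotH hTL (Or.inr rfl : (∃ n:ℕ, T = (n:ℂ)) ∨ T = T) with hOT | ⟨c₁, hc₁, hLT⟩
    · rcases s.dichotGinf hTL with hOg | ⟨b, hb, hLg⟩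
      · exact s.chainOutOut hTD hO0 hOg
      · have e0 := s.chainOutLim hTD hO0 hLg
        have eT := s.chainOutLim hTD hOT hLg
        exact hT0 (eT.symm.trans e0)
    · exact s.caseB2 hOut ht0 htr (Or.inr rfl) hc₁ hLT
  · exact s.caseB2 hOut ht0 htr (Or.inl rfl) hc₀ hL0

end PSetup

/-- the grand contradiction -/
lemma PSetup.contradiction (s : PSetup) : False := by
  have h0L : (0:ℂ) ∈ Metric.closedBall (0:ℂ) s.r := Metric.mem_closedBall_self s.hr.le
  rcases s.dichotH h0L (Or.inr rfl : (∃ n:ℕ, (0:ℂ) = (n:ℂ)) ∨ (0:ℂ) = 0) with hOut | ⟨c, hc, hLim⟩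
  · exact s.caseB hOut
  · exact s.caseA hc hLim

def Mset : Set (ℂ × ℂ) := {q : ℂ × ℂ | (∀ n : ℕ, q.2 ≠ (n : ℂ)) ∧ q.1 ≠ q.2}

lemma no_triv (D : Set ℂ) (hD : IsOpen D) (h0D : (0:ℂ) ∈ D)
    (Φ : ℂ × ℂ → ℂ × (ℂ × ℂ)) (Ψ : ℂ × (ℂ × ℂ) → ℂ × ℂ)
    (hΦc : ContinuousOn Φ (Mset ∩ Prod.fst ⁻¹' D))
    (hΨc : ContinuousOn Ψ (D ×ˢ (Mset ∩ Prod.fst ⁻¹' {(0:ℂ)})))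
    (hΦm : Set.MapsTo Φ (Mset ∩ Prod.fst ⁻¹' D) (D ×ˢ (Mset ∩ Prod.fst ⁻¹' {(0:ℂ)})))
    (hΨm : Set.MapsTo Ψ (D ×ˢ (Mset ∩ Prod.fst ⁻¹' {(0:ℂ)})) (Mset ∩ Prod.fst ⁻¹' D))
    (hli : Set.LeftInvOn Ψ Φ (Mset ∩ Prod.fst ⁻¹' D))
    (hri : Set.RightInvOn Ψ Φ (D ×ˢ (Mset ∩ Prod.fst ⁻¹' {(0:ℂ)})))
    (hfib : ∀ q ∈ (Mset ∩ Prod.fst ⁻¹' D), (Φ q).1 = q.1) : False := by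
  set E := Mset ∩ Prod.fst ⁻¹' D with hEdef
  set F := Mset ∩ Prod.fst ⁻¹' {(0:ℂ)} with hFdef
  have hEmem : ∀ z w, z ∈ D → NN w → w ≠ z → (z,w) ∈ E := by
    intro z w hz hw hwz
    exact ⟨⟨hw, fun h => hwz h.symm⟩, hz⟩
  have hFmem : ∀ v, NN v → ((0:ℂ), v) ∈ F := by
    intro v hv
    refine ⟨⟨hv, ?_⟩, rfl⟩
    intro h
    have h0 : (0:ℂ) = v := h
    exact hv 0 (by rw [← h0]; norm_num)
  have hTmem : ∀ z v, z ∈ D → NN v → (z, ((0:ℂ), v)) ∈ D ×ˢ F := by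
    intro z v hz hv
    exact ⟨hz, hFmem v hv⟩
  set hfun : ℂ → ℂ → ℂ := fun z w => (Φ (z,w)).2.2 with hhfun
  set gfun : ℂ → ℂ → ℂ := fun z v => (Ψ (z,((0:ℂ),v))).2 with hgfun
  have hΦ_eq : ∀ z ∈ D, ∀ w, NN w → w ≠ z → Φ (z,w) = (z, ((0:ℂ), hfun z w)) := by
    intro z hz w hw hwz
    have hq : (z,w) ∈ E := hEmem z w hz hw hwz
    have h1 : (Φ (z,w)).1 = z := hfib _ hq
    have h2 := hΦm hq
    have h3 : (Φ (z,w)).2.1 = 0 := h2.2.2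
    have : Φ (z,w) = ((Φ (z,w)).1, ((Φ (z,w)).2.1, (Φ (z,w)).2.2)) := rfl
    rw [this, h1, h3]
  have hmemS : ∀ z ∈ D, ∀ w, NN w → w ≠ z → NN (hfun z w) := by
    intro z hz w hw hwz
    exact (hΦm (hEmem z w hz hw hwz)).2.1.1
  have hΨ_eq : ∀ z ∈ D, ∀ v, NN v → Ψ (z,((0:ℂ),v)) = (z, gfun z v) := by
    intro z hz v hv
    have hx : (z,((0:ℂ),v)) ∈ D ×ˢ F := hTmem z v hz hv
    have h1 : Φ (Ψ (z,((0:ℂ),v))) = (z,((0:ℂ),v)) := hri hx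
    have h2 : Ψ (z,((0:ℂ),v)) ∈ E := hΨm hx
    have h3 : (Φ (Ψ (z,((0:ℂ),v)))).1 = (Ψ (z,((0:ℂ),v))).1 := hfib _ h2
    have h4 : (Ψ (z,((0:ℂ),v))).1 = z := by rw [← h3, h1]
    have : Ψ (z,((0:ℂ),v)) = ((Ψ (z,((0:ℂ),v))).1, (Ψ (z,((0:ℂ),v))).2) := rfl
    rw [this, h4]
  have hgmem : ∀ z ∈ D, ∀ v, NN v → NN (gfun z v) ∧ gfun z v ≠ z := by
    intro z hz v hv
    have h2 : Ψ (z,((0:ℂ),v)) ∈ E := hΨm (hTmem z v hz hv)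
    rw [hΨ_eq z hz v hv] at h2
    exact ⟨h2.1.1, fun h => h2.1.2 h.symm⟩
  have hghS : ∀ z ∈ D, ∀ w, NN w → w ≠ z → gfun z (hfun z w) = w := by
    intro z hz w hw hwz
    have h1 : Ψ (z, ((0:ℂ), hfun z w)) = (z,w) := by
      rw [← hΦ_eq z hz w hw hwz]
      exact hli (hEmem z w hz hw hwz)
    show (Ψ (z,((0:ℂ), hfun z w))).2 = w
    rw [h1]
  have hhgS : ∀ z ∈ D, ∀ v, NN v → hfun z (gfun z v) = v := by
    intro z hz v hv
    have h1 : Φ (z, gfun z v) = (z, ((0:ℂ), v)) := by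
      rw [← hΨ_eq z hz v hv]
      exact hri (hTmem z v hz hv)
    show (Φ (z, gfun z v)).2.2 = v
    rw [h1]
  -- choice of r
  obtain ⟨ε, hε0, hεD⟩ := Metric.isOpen_iff.1 hD 0 h0D
  set r : ℝ := min (ε/2) (1/8) with hrdef
  have hr0 : 0 < r := lt_min (by linarith) (by norm_num)
  have hr8 : r ≤ 1/8 := min_le_right _ _
  have hrD : Metric.closedBall (0:ℂ) r ⊆ D := by
    intro x hx
    apply hεD
    rw [Metric.mem_ball]
    have h1 : dist x 0 ≤ r := Metric.mem_closedBall.1 hx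
    have h2 : r ≤ ε/2 := min_le_left _ _
    linarith
  set L := Metric.closedBall (0:ℂ) r with hLdef
  have hEopen : IsOpen E := Mset_open.inter (hD.preimage continuous_fst)
  have hNNopen : IsOpen {v : ℂ | NN v} := open_nonnat
  -- continuity facts
  have hcontHw : ∀ z ∈ D, ContinuousOn (hfun z) {w | NN w ∧ w ≠ z} := by
    intro z hz
    have hb : ContinuousOn (fun w => Φ (z, w)) {w | NN w ∧ w ≠ z} := by
      apply hΦc.comp (Continuous.continuousOn (continuous_const.prodMk continuous_id))
      intro w hw
      exact hEmem z w hz hw.1 hw.2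
    exact (continuous_snd.comp continuous_snd).comp_continuousOn hb
  have hcontGw : ∀ z ∈ D, ContinuousOn (gfun z) {v | NN v} := by
    intro z hz
    have hb : ContinuousOn (fun v => Ψ (z, ((0:ℂ), v))) {v | NN v} := by
      apply hΨc.comp (Continuous.continuousOn
        (continuous_const.prodMk (continuous_const.prodMk continuous_id)))
      intro v hv
      exact hTmem z v hz hv
    exact continuous_snd.comp_continuousOn hb
  have hcontH : ∀ w₀, NN w₀ → ContinuousOn (fun z => hfun z w₀) {z | z ∈ D ∧ w₀ ≠ z} := by
    intro w₀ hw₀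
    have hb : ContinuousOn (fun z => Φ (z, w₀)) {z | z ∈ D ∧ w₀ ≠ z} := by
      apply hΦc.comp (Continuous.continuousOn (continuous_id.prodMk continuous_const))
      intro z hz
      exact hEmem z w₀ hz.1 hw₀ hz.2
    exact (continuous_snd.comp continuous_snd).comp_continuousOn hb
  have hcontG : ∀ v₀, NN v₀ → ContinuousOn (fun z => gfun z v₀) D := by
    intro v₀ hv₀
    have hb : ContinuousOn (fun z => Ψ (z, ((0:ℂ), v₀))) D := by
      apply hΨc.comp (Continuous.continuousOn
        (continuous_id.prodMk continuous_const))
      intro z hz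
      exact hTmem z v₀ hz hv₀
    exact continuous_snd.comp_continuousOn hb
  -- escape lemma for h
  have hescape_h : ∀ K : Set ℂ, IsCompact K → (∀ v ∈ K, NN v) →
      ∃ δ > 0, ∃ R, ∀ z ∈ L, ∀ w, NN w → w ≠ z → hfun z w ∈ K →
        (∀ n:ℕ, δ ≤ dist w (n:ℂ)) ∧ δ ≤ dist w z ∧ dist w 0 ≤ R := by
    intro K hK hKNN
    set SK := (fun p : ℂ × ℂ => Ψ (p.1, ((0:ℂ), p.2))) '' (L ×ˢ K) with hSK
    have hmapcont : ContinuousOn (fun p : ℂ × ℂ => Ψ (p.1, ((0:ℂ), p.2))) (L ×ˢ K) := by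
      apply hΨc.comp (Continuous.continuousOn
        (continuous_fst.prodMk (continuous_const.prodMk continuous_snd)))
      rintro ⟨z, v⟩ ⟨hz, hv⟩
      exact hTmem z v (hrD hz) (hKNN v hv)
    have hSKc : IsCompact SK := ((isCompact_closedBall _ _).prod hK).image_of_continuousOn hmapcont
    have hSKE : SK ⊆ E := by
      rintro - ⟨⟨z, v⟩, ⟨hz, hv⟩, rfl⟩
      exact hΨm (hTmem z v (hrD hz) (hKNN v hv))
    obtain ⟨δ, hδ0, hth⟩ := hSKc.exists_thickening_subset_open hEopen hSKE
    obtain ⟨R, hR⟩ := hSKc.isBounded.subset_closedBall 0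
    refine ⟨δ, hδ0, R, fun z hz w hwNN hwz hwK => ?_⟩
    have hzD : z ∈ D := hrD hz
    have hq : (z, w) ∈ SK := by
      refine ⟨(z, hfun z w), ⟨hz, hwK⟩, ?_⟩
      show Ψ (z, ((0:ℂ), hfun z w)) = (z, w)
      rw [hΨ_eq z hzD _ (hmemS z hzD w hwNN hwz), hghS z hzD w hwNN hwz]
    refine ⟨?_, ?_, ?_⟩
    · intro n
      by_contra hlt
      push_neg at hlt
      have hmem : (z, (n:ℂ)) ∈ Metric.thickening δ SK := by
        rw [Metric.mem_thickening_iff]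
        refine ⟨(z, w), hq, ?_⟩
        rw [Prod.dist_eq]
        simp only [dist_self]
        rw [max_eq_right dist_nonneg]
        rw [dist_comm] at hlt
        exact hlt
      exact ((hth hmem).1.1) n rfl
    · by_contra hlt
      push_neg at hlt
      have hmem : (z, z) ∈ Metric.thickening δ SK := by
        rw [Metric.mem_thickening_iff]
        refine ⟨(z, w), hq, ?_⟩
        rw [Prod.dist_eq]
        simp only [dist_self]
        rw [max_eq_right dist_nonneg]
        rw [dist_comm] at hlt
        exact hlt
      exact ((hth hmem).1.2) rfl
    · have := hR hq
      rw [Metric.mem_closedBall, Prod.dist_eq] at this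
      exact le_trans (le_max_right _ _) this
  -- escape lemma for g (uniform)
  have hescape_g : ∀ K : Set ℂ, IsCompact K → (∀ v ∈ K, NN v ∧ ∀ z ∈ L, v ≠ z) →
      ∃ δ > 0, ∃ R, ∀ z ∈ L, ∀ v, NN v → gfun z v ∈ K →
        (∀ n:ℕ, δ ≤ dist v (n:ℂ)) ∧ dist v 0 ≤ R := by
    intro K hK hKcond
    set VK := (fun p : ℂ × ℂ => (Φ p).2.2) '' (L ×ˢ K) with hVK
    have hmapcont : ContinuousOn (fun p : ℂ × ℂ => (Φ p).2.2) (L ×ˢ K) := by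
      apply (continuous_snd.comp continuous_snd).comp_continuousOn
      apply hΦc.mono
      rintro ⟨z, v⟩ ⟨hz, hv⟩
      exact hEmem z v (hrD hz) (hKcond v hv).1 ((hKcond v hv).2 z hz)
    have hVKc : IsCompact VK := ((isCompact_closedBall _ _).prod hK).image_of_continuousOn hmapcont
    have hVKsub : VK ⊆ {v : ℂ | NN v} := by
      rintro - ⟨⟨z, v⟩, ⟨hz, hv⟩, rfl⟩
      exact hmemS z (hrD hz) v (hKcond v hv).1 ((hKcond v hv).2 z hz)
    obtain ⟨δ, hδ0, hth⟩ := hVKc.exists_thickening_subset_open hNNopen hVKsub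
    obtain ⟨R, hR⟩ := hVKc.isBounded.subset_closedBall 0
    refine ⟨δ, hδ0, R, fun z hz v hvNN hvK => ?_⟩
    have hzD : z ∈ D := hrD hz
    have hvVK : v ∈ VK := by
      refine ⟨(z, gfun z v), ⟨hz, hvK⟩, ?_⟩
      show (Φ (z, gfun z v)).2.2 = v
      exact hhgS z hzD v hvNN
    constructor
    · intro n
      by_contra hlt
      push_neg at hlt
      have hmem : (n:ℂ) ∈ Metric.thickening δ VK := by
        rw [Metric.mem_thickening_iff]
        refine ⟨v, hvVK, ?_⟩
        rw [dist_comm] at hlt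
        exact hlt
      exact (hth hmem) n rfl
    · exact Metric.mem_closedBall.1 (hR hvVK)
  -- assemble
  set s : PSetup :=
    { D := D
      r := r
      hr := hr0
      hr8 := hr8
      hrD := hrD
      h := hfun
      g := gfun
      hmem := hmemS
      gmem := hgmem
      hgh := hghS
      hhg := hhgS
      contHw := hcontHw
      contGw := hcontGw
      contH := hcontH
      contG := hcontG
      escape_h := hescape_h
      escape_gU := hescape_g }
  exact s.contradiction


end AuxProof

/-- Let `M = ℂ² \ ((⋃ₙ {w = n}) ∪ {z = w})` and `p(z,w) = z`. Then `p`
is a surjective holomorphic submersion, every fibre is homeomorphic to `ℂ \ ℕ`, yet `p`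
is not a locally trivial fibration. -/
theorem statement17 (M : Set (ℂ × ℂ))
    (hM : M = {q : ℂ × ℂ | (∀ n : ℕ, q.2 ≠ (n : ℂ)) ∧ q.1 ≠ q.2})
    (p : ℂ × ℂ → ℂ) (hp : p = Prod.fst) :
    (∀ z₀ : ℂ, ∃ w : ℂ, (z₀, w) ∈ M) ∧
    Differentiable ℂ p ∧
    (∀ q ∈ M, Function.Surjective (fderiv ℂ p q)) ∧
    (∀ z₀ : ℂ, Nonempty
      ((↥{w : ℂ | (z₀, w) ∈ M}) ≃ₜ (↥{w : ℂ | ∀ n : ℕ, w ≠ (n : ℂ)}))) ∧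
    ¬ ∀ z₀ : ℂ, ∃ D : Set ℂ, IsOpen D ∧ z₀ ∈ D ∧
      ∃ (Φ : ℂ × ℂ → ℂ × (ℂ × ℂ)) (Ψ : ℂ × (ℂ × ℂ) → ℂ × ℂ),
        IsHomeoOn Φ Ψ (M ∩ p ⁻¹' D) (D ×ˢ (M ∩ p ⁻¹' {z₀})) ∧
        ∀ q ∈ M ∩ p ⁻¹' D, (Φ q).1 = p q := by
  subst hp
  subst hM
  refine ⟨?_, ?_, ?_, ?_, ?_⟩
  · intro z₀
    by_cases h : z₀.im = -1
    · refine ⟨z₀ + 2*Complex.I, fun n hn => ?_, fun hw => by simpa using congrArg Complex.im hw⟩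
      have := congrArg Complex.im hn
      simp [h] at this
      linarith
    · refine ⟨z₀ + Complex.I, fun n hn => ?_, fun hw => by simpa using congrArg Complex.im hw⟩
      have := congrArg Complex.im hn
      simp at this
      exact h (by linarith)
  · exact differentiable_fst
  · intro q _
    have h : fderiv ℂ (Prod.fst : ℂ × ℂ → ℂ) q = ContinuousLinearMap.fst ℂ ℂ ℂ :=
      (hasFDerivAt_fst (𝕜 := ℂ)).fderiv
    rw [h]
    exact fun y => ⟨(y, 0), rfl⟩
  · intro z₀
    exact fibre_homeo z₀
  · intro hall
    obtain ⟨D, hD, h0D, Φ, Ψ, ⟨hΦc, hΨc, hΦm, hΨm, hli, hri⟩, hfib⟩ := hall 0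
    exact no_triv D hD h0D Φ Ψ hΦc hΨc hΦm hΨm hli hri (fun q hq => hfib q hq)

end
end
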